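/- arXiv:2512.12599 — 5 statements merged into one kernel-verified Lean document; each statement's English description precedes it below -/
import Mathlib

section
/- Let A and B be n×n real symmetric matrices and let e be the all-ones vector in ℝ^n. If A is similar to B and A + ee^T is similar to B + ee^T, then there exists an orthogonal matrix Q such that Q^T A Q = B and Q^T e = e. -/
open Matrix Polynomial Finset

-- permutation from equal multisets
lemma exists_perm_comp {n : ℕ} (f g : Fin n → ℝ)
    (h : Multiset.map f Finset.univ.val = Multiset.map g Finset.univ.val) :
    ∃ σ : Equiv.Perm (Fin n), g = f ∘ σ := by
  have hperm : (List.ofFn f).Perm (List.ofFn g) := by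
    rw [← Multiset.coe_eq_coe]
    simpa [Finset.univ, Fintype.elems, List.ofFn_eq_map, ← Multiset.map_coe] using h
  have h1 : (List.ofFn (f ∘ Tuple.sort f)).Perm (List.ofFn (g ∘ Tuple.sort g)) :=
    ((Equiv.Perm.ofFn_comp_perm (Tuple.sort f) f).trans hperm).trans
      (Equiv.Perm.ofFn_comp_perm (Tuple.sort g) g).symm
  have heq : f ∘ Tuple.sort f = g ∘ Tuple.sort g :=
    List.ofFn_injective <| List.Perm.eq_of_sortedLE
      ((Tuple.monotone_sort f).sortedLE_ofFn) ((Tuple.monotone_sort g).sortedLE_ofFn) h1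
  refine ⟨(Tuple.sort g).symm.trans (Tuple.sort f), funext fun x => ?_⟩
  have := congrFun heq ((Tuple.sort g).symm x)
  simpa using this.symm

-- charpoly invariant under conjugation
lemma charpoly_conj {n : ℕ} (U V M : Matrix (Fin n) (Fin n) ℝ) (hUV : U * V = 1) :
    (U * M * V).charpoly = M.charpoly := by
  have hmap : ∀ (P Q : Matrix (Fin n) (Fin n) ℝ),
      (P * Q).map (C : ℝ →+* ℝ[X]) = P.map C * Q.map C := fun P Q => Matrix.map_mul
  have hcm : charmatrix (U * M * V) = U.map C * charmatrix M * V.map C := by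
    unfold charmatrix
    simp only [RingHom.mapMatrix_apply]
    rw [Matrix.mul_sub, Matrix.sub_mul, hmap, hmap]
    congr 1
    have h1 : (U.map (C : ℝ →+* ℝ[X])) * (V.map C) = 1 := by
      rw [← hmap, hUV]; simp
    calc Matrix.scalar (Fin n) (X : ℝ[X])
        = U.map C * V.map C * Matrix.scalar (Fin n) X := by rw [h1, one_mul]
      _ = U.map C * Matrix.scalar (Fin n) X * V.map C := by
          rw [Matrix.mul_assoc, Matrix.mul_assoc]
          congr 1
          exact ((Matrix.scalar_commute X (fun r' => Commute.all _ _) (V.map C)).symm).eq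
  have hdet1 : (U.map (C : ℝ →+* ℝ[X])).det * (V.map C).det = 1 := by
    rw [← det_mul, ← hmap, hUV]; simp
  rw [Matrix.charpoly, Matrix.charpoly, hcm, det_mul, det_mul]
  ring_nf
  calc (U.map (C : ℝ →+* ℝ[X])).det * (charmatrix M).det * (V.map C).det
      = (charmatrix M).det * ((U.map (C : ℝ →+* ℝ[X])).det * (V.map C).det) := by ring
    _ = (charmatrix M).det := by rw [hdet1, mul_one]
  
-- charpoly of diagonal
lemma charpoly_diagonal {n : ℕ} (d : Fin n → ℝ) :
    (diagonal d).charpoly = ∏ i, (X - C (d i)) := by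
  have : charmatrix (diagonal d) = diagonal (fun i => (X : ℝ[X]) - C (d i)) := by
    ext i j
    by_cases h : i = j
    · subst h; simp [charmatrix_apply]
    · simp [charmatrix_apply_ne _ _ _ h, diagonal_apply_ne _ h]
  rw [Matrix.charpoly, this, det_diagonal]

lemma charpoly_diag_add_rankone {n : ℕ} (d u : Fin n → ℝ) :
    (diagonal d + vecMulVec u u).charpoly
      = ∏ i, (X - C (d i)) - ∑ i, C (u i ^ 2) * ∏ j ∈ Finset.univ.erase i, (X - C (d j)) := by
  apply Polynomial.eq_of_infinite_eval_eq
  apply Set.Infinite.mono (s := (Set.range d)ᶜ)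
  swap
  · exact Set.Finite.infinite_compl (Set.finite_range d)
  intro x hx
  simp only [Set.mem_compl_iff, Set.mem_range, not_exists] at hx
  have hx' : ∀ i, x - d i ≠ 0 := fun i => sub_ne_zero.mpr (fun h => hx i h.symm)
  simp only [Set.mem_setOf_eq]
  -- RHS evaluation
  have hR : eval x (∏ i, (X - C (d i)) - ∑ i, C (u i ^ 2) * ∏ j ∈ Finset.univ.erase i, (X - C (d j)))
      = ∏ i, (x - d i) - ∑ i, u i ^ 2 * ∏ j ∈ Finset.univ.erase i, (x - d j) := by
    simp [eval_prod, eval_finset_sum]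
  rw [hR]
  -- LHS evaluation
  have hL : eval x ((diagonal d + vecMulVec u u).charpoly)
      = ((charmatrix (diagonal d + vecMulVec u u)).map (evalRingHom x)).det := by
    rw [Matrix.charpoly]; exact RingHom.map_det (evalRingHom x) _
  rw [hL]
  have hmat : (charmatrix (diagonal d + vecMulVec u u)).map (evalRingHom x)
      = diagonal (fun i => x - d i) + Matrix.replicateCol Unit (fun i => -u i) * Matrix.replicateRow Unit u := by
    ext i j
    by_cases h : i = j
    · subst h
      simp [charmatrix_apply_eq, Matrix.mul_apply, vecMulVec_apply]
      try ring
    · simp [charmatrix_apply_ne _ _ _ h, Matrix.mul_apply, vecMulVec_apply,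
        diagonal_apply_ne _ h]
      try ring
  rw [hmat]
  have hdet : IsUnit (diagonal (fun i => x - d i)).det := by
    rw [det_diagonal]
    exact (Finset.prod_ne_zero_iff.mpr (fun i _ => hx' i)).isUnit
  rw [Matrix.det_add_replicateCol_mul_replicateRow hdet, det_diagonal]
  have hinv : (diagonal (fun i => x - d i))⁻¹ = diagonal (fun i => (x - d i)⁻¹) := by
    apply Matrix.inv_eq_right_inv
    rw [diagonal_mul_diagonal]
    convert diagonal_one with i
    exact mul_inv_cancel₀ (hx' i)
  rw [hinv, Matrix.det_unique]
  have hentry : ((1 + Matrix.replicateRow Unit u * diagonal (fun i => (x - d i)⁻¹)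
        * Matrix.replicateCol Unit (fun i => -u i)) : Matrix Unit Unit ℝ) default default
      = 1 - ∑ j, u j ^ 2 * (x - d j)⁻¹ := by
    simp [Matrix.mul_apply, Matrix.replicateRow_apply, Matrix.replicateCol_apply, diagonal_apply,
      Finset.mul_sum, Finset.sum_ite_eq, sub_eq_add_neg]
    congr 1
    funext j
    ring
  rw [hentry, mul_sub, mul_one, Finset.mul_sum]
  congr 1
  refine Finset.sum_congr rfl fun j _ => ?_
  rw [← Finset.mul_prod_erase Finset.univ _ (Finset.mem_univ j)]
  have := hx' j
  field_simp

lemma class_sum_sq_eq {n : ℕ} (d u v : Fin n → ℝ)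
    (h : (∑ i, C (u i ^ 2) * ∏ j ∈ Finset.univ.erase i, (X - C (d j)))
       = (∑ i, C (v i ^ 2) * ∏ j ∈ Finset.univ.erase i, (X - C (d j)))) (lam : ℝ) :
    ∑ i ∈ Finset.univ.filter (fun i => d i = lam), u i ^ 2
      = ∑ i ∈ Finset.univ.filter (fun i => d i = lam), v i ^ 2 := by
  classical
  set F : Finset (Fin n) := Finset.univ.filter (fun i => d i = lam) with hF
  by_cases hFe : F = ∅
  · simp [hFe]
  have hm : 1 ≤ F.card := Nat.one_le_iff_ne_zero.mpr (fun hc => hFe (Finset.card_eq_zero.mp hc))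
  set m : ℕ := F.card with hmdef
  set Fc : Finset (Fin n) := Finset.univ.filter (fun i => ¬ d i = lam) with hFc
  set G : ℝ[X] := ∏ j ∈ Fc, (X - C (d j)) with hG
  -- decomposition of the sum for any w
  have key : ∀ w : Fin n → ℝ,
      (∑ i, C (w i ^ 2) * ∏ j ∈ Finset.univ.erase i, (X - C (d j)))
        = (X - C lam) ^ (m - 1) *
          (C (∑ i ∈ F, w i ^ 2) * G +
            (X - C lam) * ∑ i ∈ Fc, C (w i ^ 2) * ∏ j ∈ Fc.erase i, (X - C (d j))) := by
    intro w
    have hsplit : (∑ i, C (w i ^ 2) * ∏ j ∈ Finset.univ.erase i, (X - C (d j)))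
        = (∑ i ∈ F, C (w i ^ 2) * ∏ j ∈ Finset.univ.erase i, (X - C (d j)))
          + ∑ i ∈ Fc, C (w i ^ 2) * ∏ j ∈ Finset.univ.erase i, (X - C (d j)) :=
      (Finset.sum_filter_add_sum_filter_not Finset.univ _ _).symm
    have hdisj : Disjoint F Fc := by
      rw [hF, hFc, Finset.disjoint_filter]
      tauto
    have hprodF : ∀ i ∈ F, (∏ j ∈ Finset.univ.erase i, (X - C (d j)))
        = (X - C lam) ^ (m - 1) * G := by
      intro i hi
      have hunion : Finset.univ.erase i = (F.erase i) ∪ Fc := by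
        ext j
        simp only [Finset.mem_erase, Finset.mem_univ, and_true, Finset.mem_union, hF, hFc,
          Finset.mem_filter, true_and]
        constructor
        · intro hj
          by_cases hdj : d j = lam
          · exact Or.inl ⟨hj, hdj⟩
          · exact Or.inr hdj
        · rintro (⟨hj, _⟩ | hdj)
          · exact hj
          · rintro rfl
            rw [hF, Finset.mem_filter] at hi
            exact hdj hi.2
      rw [hunion, Finset.prod_union (hdisj.mono (Finset.erase_subset _ _) le_rfl)]
      congr 1
      have : ∀ j ∈ F.erase i, (X - C (d j)) = (X - C lam) := by
        intro j hj
        have := Finset.mem_of_mem_erase hj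
        rw [hF, Finset.mem_filter] at this
        rw [this.2]
      rw [Finset.prod_congr rfl this, Finset.prod_const, Finset.card_erase_of_mem hi]
    have hprodFc : ∀ i ∈ Fc, (∏ j ∈ Finset.univ.erase i, (X - C (d j)))
        = (X - C lam) ^ m * ∏ j ∈ Fc.erase i, (X - C (d j)) := by
      intro i hi
      have hunion : Finset.univ.erase i = F ∪ (Fc.erase i) := by
        ext j
        simp only [Finset.mem_erase, Finset.mem_univ, and_true, Finset.mem_union, hF, hFc,
          Finset.mem_filter, true_and]
        constructor
        · intro hj
          by_cases hdj : d j = lam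
          · exact Or.inl hdj
          · exact Or.inr ⟨hj, hdj⟩
        · rintro (hdj | ⟨hj, _⟩)
          · rintro rfl
            rw [hFc, Finset.mem_filter] at hi
            exact hi.2 hdj
          · exact hj
      rw [hunion, Finset.prod_union (hdisj.mono le_rfl (Finset.erase_subset _ _))]
      congr 1
      have : ∀ j ∈ F, (X - C (d j)) = (X - C lam) := by
        intro j hj
        rw [hF, Finset.mem_filter] at hj
        rw [hj.2]
      rw [Finset.prod_congr rfl this, Finset.prod_const]
    have h1 : (∑ i ∈ F, C (w i ^ 2) * ∏ j ∈ Finset.univ.erase i, (X - C (d j)))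
        = (∑ i ∈ F, C (w i ^ 2)) * ((X - C lam) ^ (m - 1) * G) := by
      rw [Finset.sum_mul]
      exact Finset.sum_congr rfl (fun i hi => by rw [hprodF i hi])
    have h2 : (∑ i ∈ Fc, C (w i ^ 2) * ∏ j ∈ Finset.univ.erase i, (X - C (d j)))
        = (X - C lam) ^ m * ∑ i ∈ Fc, C (w i ^ 2) * ∏ j ∈ Fc.erase i, (X - C (d j)) := by
      rw [Finset.mul_sum]
      exact Finset.sum_congr rfl (fun i hi => by rw [hprodFc i hi]; ring)
    have hpow : (X - C lam) ^ m = (X - C lam) ^ (m - 1) * (X - C lam) := by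
      conv_lhs => rw [← Nat.succ_pred_eq_of_pos hm]
      rw [pow_succ]
      rfl
    rw [hsplit, h1, h2, hpow, map_sum]
    ring
  rw [key u, key v] at h
  have hcancel := mul_left_cancel₀ (pow_ne_zero (m - 1) (X_sub_C_ne_zero lam)) h
  have hev := congrArg (eval lam) hcancel
  simp only [eval_add, eval_mul, eval_sub, eval_X, eval_C, sub_self, zero_mul, add_zero] at hev
  have hGne : eval lam G ≠ 0 := by
    rw [hG, eval_prod]
    refine Finset.prod_ne_zero_iff.mpr fun j hj => ?_
    rw [hFc, Finset.mem_filter] at hj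
    simp only [eval_sub, eval_X, eval_C]
    exact sub_ne_zero.mpr (fun hc => hj.2 hc.symm)
  exact mul_right_cancel₀ hGne hev

lemma vecMulVec_transpose' {n : ℕ} (a b : Fin n → ℝ) :
    (vecMulVec a b)ᵀ = vecMulVec b a := by
  ext i j; simp [vecMulVec_apply, transpose_apply, mul_comm]

lemma vecMulVec_mul_vecMulVec' {n : ℕ} (a b c e : Fin n → ℝ) :
    vecMulVec a b * vecMulVec c e = (∑ k, b k * c k) • vecMulVec a e := by
  ext i j
  simp only [Matrix.mul_apply, vecMulVec_apply, Matrix.smul_apply, smul_eq_mul]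
  rw [Finset.sum_mul]
  exact Finset.sum_congr rfl fun k _ => by ring

lemma vecMulVec_mulVec' {n : ℕ} (a b x : Fin n → ℝ) :
    vecMulVec a b *ᵥ x = (∑ k, b k * x k) • a := by
  funext i
  simp only [Matrix.mulVec, dotProduct, vecMulVec_apply, Pi.smul_apply, smul_eq_mul]
  rw [Finset.sum_mul]
  exact Finset.sum_congr rfl fun k _ => by ring

lemma sum_mulVec' {n : ℕ} {α : Type*} (s : Finset α) (M : α → Matrix (Fin n) (Fin n) ℝ)
    (x : Fin n → ℝ) : (∑ a ∈ s, M a) *ᵥ x = ∑ a ∈ s, (M a *ᵥ x) := by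
  funext i
  simp [Matrix.mulVec, dotProduct, Matrix.sum_apply, Finset.sum_mul]
  rw [Finset.sum_comm]

lemma exists_reflection {n : ℕ} (d u v : Fin n → ℝ)
    (hclass : ∀ lam : ℝ, ∑ i ∈ Finset.univ.filter (fun i => d i = lam), u i ^ 2
                       = ∑ i ∈ Finset.univ.filter (fun i => d i = lam), v i ^ 2) :
    ∃ W : Matrix (Fin n) (Fin n) ℝ, Wᵀ = W ∧ W * W = 1 ∧
      W * diagonal d = diagonal d * W ∧ W *ᵥ u = v := by
  classical
  set w : ℝ → Fin n → ℝ := fun lam i => if d i = lam then u i - v i else 0 with hw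
  set ns : ℝ → ℝ := fun lam => ∑ i, w lam i ^ 2 with hns
  set K : Finset ℝ := (Finset.univ.image d).filter (fun lam => w lam ≠ 0) with hK
  have hsupp : ∀ lam i, d i ≠ lam → w lam i = 0 := fun lam i h => by simp [hw, h]
  have hsupp' : ∀ lam i, w lam i ≠ 0 → d i = lam := fun lam i h => by
    by_contra hc; exact h (hsupp _ _ hc)
  have hval : ∀ lam i, d i = lam → w lam i = u i - v i := fun lam i h => by simp [hw, h]
  have hns_pos : ∀ lam ∈ K, 0 < ns lam := by
    intro lam hlam
    rw [hK, Finset.mem_filter] at hlam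
    obtain ⟨i, hi⟩ := Function.ne_iff.mp hlam.2
    exact Finset.sum_pos' (fun j _ => sq_nonneg _) ⟨i, Finset.mem_univ i, lt_of_le_of_ne (sq_nonneg _) (Ne.symm (pow_ne_zero 2 hi))⟩
  have hns_eq : ∀ lam, ns lam = 2 * ∑ i, w lam i * u i := by
    intro lam
    have h0 : ∑ i, (w lam i ^ 2 - 2 * (w lam i * u i)) = 0 := by
      have hterm : ∀ i, w lam i ^ 2 - 2 * (w lam i * u i)
          = (if d i = lam then v i ^ 2 - u i ^ 2 else 0) := by
        intro i
        by_cases h : d i = lam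
        · rw [hval lam i h, if_pos h]; ring
        · rw [hsupp lam i h, if_neg h]; ring
      rw [Finset.sum_congr rfl fun i _ => hterm i, ← Finset.sum_filter,
        Finset.sum_sub_distrib, hclass lam, sub_self]
    rw [Finset.sum_sub_distrib, ← Finset.mul_sum] at h0
    have hns' : ns lam = ∑ i, w lam i ^ 2 := rfl
    rw [hns']
    linarith
  set S : Matrix (Fin n) (Fin n) ℝ :=
    ∑ lam ∈ K, (2 / ns lam) • vecMulVec (w lam) (w lam) with hS
  set W : Matrix (Fin n) (Fin n) ℝ := 1 - S with hWdef
  have hdot0 : ∀ lam ∈ K, ∀ mu ∈ K, lam ≠ mu → (∑ k, w lam k * w mu k) = 0 := by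
    intro lam _ mu _ hne
    refine Finset.sum_eq_zero fun k _ => ?_
    by_cases h1 : w lam k = 0
    · rw [h1, zero_mul]
    · have h2 : d k = lam := hsupp' _ _ h1
      rw [hsupp mu k (by rw [h2]; exact hne), mul_zero]
  refine ⟨W, ?_, ?_, ?_, ?_⟩
  · -- symmetry
    rw [hWdef, Matrix.transpose_sub, Matrix.transpose_one, hS, Matrix.transpose_sum]
    congr 1
    refine Finset.sum_congr rfl fun lam _ => ?_
    rw [Matrix.transpose_smul, vecMulVec_transpose']
  · -- W * W = 1
    have hSS : S * S = S + S := by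
      rw [hS, Finset.sum_mul_sum]
      have hinner : ∀ lam ∈ K,
          (∑ mu ∈ K, ((2 / ns lam) • vecMulVec (w lam) (w lam)) *
            ((2 / ns mu) • vecMulVec (w mu) (w mu)))
          = ((2 / ns lam) + (2 / ns lam)) • vecMulVec (w lam) (w lam) := by
        intro lam hlam
        rw [Finset.sum_eq_single lam]
        · rw [smul_mul_assoc, mul_smul_comm, vecMulVec_mul_vecMulVec']
          rw [smul_smul, smul_smul]
          congr 1
          have hpos := hns_pos lam hlam
          have hne : ns lam ≠ 0 := ne_of_gt hpos
          have hnn : (∑ k, w lam k * w lam k) = ns lam := by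
            rw [hns]
            exact Finset.sum_congr rfl fun k _ => (pow_two (w lam k)).symm
          rw [hnn]
          field_simp
          ring
        · intro mu hmu hne
          rw [smul_mul_assoc, mul_smul_comm, vecMulVec_mul_vecMulVec',
            hdot0 lam hlam mu hmu (Ne.symm hne), zero_smul, smul_zero, smul_zero]
        · intro h; exact absurd hlam h
      rw [Finset.sum_congr rfl hinner]
      simp only [add_smul, Finset.sum_add_distrib]
    have : W * W = 1 - S - S + S * S := by
      rw [hWdef]; noncomm_ring
    rw [this, hSS]; noncomm_ring
  · -- commutes with diagonal
    have hcomm : ∀ lam, vecMulVec (w lam) (w lam) * diagonal d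
        = diagonal d * vecMulVec (w lam) (w lam) := by
      intro lam
      ext i j
      rw [Matrix.mul_diagonal, Matrix.diagonal_mul]
      simp only [vecMulVec_apply]
      by_cases h1 : w lam i = 0
      · rw [h1]; ring
      by_cases h2 : w lam j = 0
      · rw [h2]; ring
      rw [hsupp' _ _ h1, hsupp' _ _ h2]
      ring
    rw [hWdef, Matrix.sub_mul, Matrix.mul_sub, Matrix.one_mul, Matrix.mul_one, hS,
      Finset.sum_mul, Finset.mul_sum]
    congr 1
    refine Finset.sum_congr rfl fun lam _ => ?_
    rw [smul_mul_assoc, mul_smul_comm, hcomm]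
  · -- W *ᵥ u = v
    have hterm : ∀ lam ∈ K, ((2 / ns lam) • vecMulVec (w lam) (w lam)) *ᵥ u = w lam := by
      intro lam hlam
      rw [Matrix.smul_mulVec, vecMulVec_mulVec', smul_smul]
      have hpos := hns_pos lam hlam
      have hne : ns lam ≠ 0 := ne_of_gt hpos
      have : 2 / ns lam * ∑ k, w lam k * u k = 1 := by
        have h2 := hns_eq lam
        field_simp
        linarith
      rw [this, one_smul]
    rw [hWdef, Matrix.sub_mulVec, Matrix.one_mulVec, hS, sum_mulVec',
      Finset.sum_congr rfl hterm]
    funext i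
    simp only [Pi.sub_apply, Finset.sum_apply]
    by_cases hKi : d i ∈ K
    · rw [Finset.sum_eq_single (d i)]
      · rw [hval (d i) i rfl]; ring
      · intro mu hmu hne
        exact hsupp mu i (Ne.symm hne)
      · intro h; exact absurd hKi h
    · have hwz : w (d i) = 0 := by
        rw [hK, Finset.mem_filter] at hKi
        push_neg at hKi
        exact hKi (Finset.mem_image_of_mem d (Finset.mem_univ i))
      have hsum : ∑ lam ∈ K, w lam i = 0 := by
        refine Finset.sum_eq_zero fun lam hlam => ?_
        refine hsupp lam i fun hc => ?_
        rw [hc] at hwz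
        rw [hK, Finset.mem_filter] at hlam
        exact hlam.2 hwz
      rw [hsum]
      have : w (d i) i = 0 := by rw [hwz]; rfl
      rw [hval (d i) i rfl] at this
      linarith

-- new helpers
lemma mul_vecMulVec {n : ℕ} (M : Matrix (Fin n) (Fin n) ℝ) (a b : Fin n → ℝ) :
    M * vecMulVec a b = vecMulVec (M *ᵥ a) b := by
  ext i j
  simp only [Matrix.mul_apply, vecMulVec_apply, Matrix.mulVec, dotProduct]
  rw [Finset.sum_mul]
  exact Finset.sum_congr rfl fun k _ => by ring

lemma vecMulVec_mul {n : ℕ} (a b : Fin n → ℝ) (N : Matrix (Fin n) (Fin n) ℝ) :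
    vecMulVec a b * N = vecMulVec a (Nᵀ *ᵥ b) := by
  ext i j
  simp only [Matrix.mul_apply, vecMulVec_apply, Matrix.mulVec, dotProduct,
    Matrix.transpose_apply]
  rw [Finset.mul_sum]
  exact Finset.sum_congr rfl fun k _ => by ring

lemma exists_perm_matrix {n : ℕ} (d : Fin n → ℝ) (σ : Equiv.Perm (Fin n)) :
    ∃ P : Matrix (Fin n) (Fin n) ℝ, Pᵀ * P = 1 ∧ P * Pᵀ = 1 ∧
      Pᵀ * diagonal d * P = diagonal (d ∘ σ) := by
  classical
  set P : Matrix (Fin n) (Fin n) ℝ := Matrix.of fun i j => if i = σ j then 1 else 0 with hP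
  have hPa : ∀ i j, P i j = if i = σ j then 1 else 0 := fun i j => rfl
  have h1 : Pᵀ * P = 1 := by
    ext j k
    rw [Matrix.mul_apply]
    simp only [Matrix.transpose_apply, hPa]
    rw [Finset.sum_eq_single (σ j)]
    · by_cases h : j = k
      · subst h; simp
      · simp [h, fun hc => h (σ.injective hc), Matrix.one_apply_ne h]
    · intro i _ hne
      rw [if_neg (fun hc => hne hc), zero_mul]
    · intro h; exact absurd (Finset.mem_univ _) h
  refine ⟨P, h1, mul_eq_one_comm.mp h1, ?_⟩
  ext j k
  rw [Matrix.mul_assoc, Matrix.mul_apply]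
  simp only [Matrix.transpose_apply, Matrix.diagonal_mul, hPa]
  rw [Finset.sum_eq_single (σ j)]
  · by_cases h : j = k
    · subst h; simp
    · have hne : ¬ σ j = σ k := fun hc => h (σ.injective hc)
      simp [hne, Matrix.diagonal_apply_ne _ h]
  · intro i _ hne
    rw [if_neg (fun hc => hne hc), zero_mul]
  · intro h; exact absurd (Finset.mem_univ _) h

theorem stmt_0 (n : ℕ) (A B : Matrix (Fin n) (Fin n) ℝ)
    (hA : A.IsSymm) (hB : B.IsSymm)
    (h1 : A.charpoly = B.charpoly)
    (h2 : (A + Matrix.vecMulVec (fun _ => (1:ℝ)) (fun _ => (1:ℝ))).charpoly =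
          (B + Matrix.vecMulVec (fun _ => (1:ℝ)) (fun _ => (1:ℝ))).charpoly) :
    ∃ Q : Matrix (Fin n) (Fin n) ℝ, Qᵀ * Q = 1 ∧ Qᵀ * A * Q = B ∧
      Qᵀ.mulVec (fun _ => (1:ℝ)) = (fun _ => (1:ℝ)) := by
  classical
  have hA' : A.IsHermitian := by
    rw [Matrix.IsHermitian, Matrix.conjTranspose_eq_transpose_of_trivial]; exact hA
  have hB' : B.IsHermitian := by
    rw [Matrix.IsHermitian, Matrix.conjTranspose_eq_transpose_of_trivial]; exact hB
  set U₀ : Matrix (Fin n) (Fin n) ℝ := (Matrix.IsHermitian.eigenvectorUnitary hA' : Matrix (Fin n) (Fin n) ℝ) with hU₀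
  set V₀ : Matrix (Fin n) (Fin n) ℝ := (Matrix.IsHermitian.eigenvectorUnitary hB' : Matrix (Fin n) (Fin n) ℝ) with hV₀
  set dA : Fin n → ℝ := hA'.eigenvalues with hdA
  set dB : Fin n → ℝ := hB'.eigenvalues with hdB
  have hstar : ∀ M : Matrix (Fin n) (Fin n) ℝ, star M = Mᵀ := fun M => by
    rw [Matrix.star_eq_conjTranspose, Matrix.conjTranspose_eq_transpose_of_trivial]
  have hU1 : U₀ᵀ * U₀ = 1 := by
    rw [← hstar U₀]
    exact Matrix.mem_unitaryGroup_iff'.mp (Matrix.IsHermitian.eigenvectorUnitary hA').2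
  have hU2 : U₀ * U₀ᵀ = 1 := mul_eq_one_comm.mp hU1
  have hV1 : V₀ᵀ * V₀ = 1 := by
    rw [← hstar V₀]
    exact Matrix.mem_unitaryGroup_iff'.mp (Matrix.IsHermitian.eigenvectorUnitary hB').2
  have hV2 : V₀ * V₀ᵀ = 1 := mul_eq_one_comm.mp hV1
  have hdiagA : U₀ᵀ * A * U₀ = diagonal dA := by
    have := (Unitary.conjStarAlgAut_star_apply (S := ℝ) _ A).symm.trans hA'.conjStarAlgAut_star_eigenvectorUnitary
    rw [hstar] at this
    rw [this, RCLike.ofReal_real_eq_id, Function.id_comp]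
  have hdiagB : V₀ᵀ * B * V₀ = diagonal dB := by
    have := (Unitary.conjStarAlgAut_star_apply (S := ℝ) _ B).symm.trans hB'.conjStarAlgAut_star_eigenvectorUnitary
    rw [hstar] at this
    rw [this, RCLike.ofReal_real_eq_id, Function.id_comp]
  -- same eigenvalues up to permutation
  have hcpA : (diagonal dA).charpoly = A.charpoly := by
    rw [← hdiagA]; exact charpoly_conj _ _ _ hU1
  have hcpB : (diagonal dB).charpoly = B.charpoly := by
    rw [← hdiagB]; exact charpoly_conj _ _ _ hV1
  have hprod : ∏ i, (X - C (dA i)) = ∏ i, (X - C (dB i)) := by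
    rw [← _root_.charpoly_diagonal, ← _root_.charpoly_diagonal, hcpA, hcpB, h1]
  have hmult : Multiset.map dA Finset.univ.val = Multiset.map dB Finset.univ.val := by
    have hA2 : (Multiset.map (fun a => X - C a) (Multiset.map dA Finset.univ.val)).prod
        = ∏ i, (X - C (dA i)) := by
      rw [Multiset.map_map, Finset.prod]
      rfl
    have hB2 : (Multiset.map (fun a => X - C a) (Multiset.map dB Finset.univ.val)).prod
        = ∏ i, (X - C (dB i)) := by
      rw [Multiset.map_map, Finset.prod]
      rfl
    have := congrArg Polynomial.roots (hA2.trans (hprod.trans hB2.symm))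
    rwa [Polynomial.roots_multiset_prod_X_sub_C, Polynomial.roots_multiset_prod_X_sub_C] at this
  obtain ⟨σ, hσ⟩ := exists_perm_comp dA dB hmult
  obtain ⟨P, hP1, hP2, hP3⟩ := exists_perm_matrix dA σ
  set V : Matrix (Fin n) (Fin n) ℝ := V₀ * Pᵀ with hV
  have hV1' : Vᵀ * V = 1 := by
    rw [hV, Matrix.transpose_mul, Matrix.transpose_transpose, Matrix.mul_assoc,
      ← Matrix.mul_assoc V₀ᵀ V₀ Pᵀ, hV1, Matrix.one_mul, hP2]
  have hV2' : V * Vᵀ = 1 := mul_eq_one_comm.mp hV1'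
  have hdiagB' : Vᵀ * B * V = diagonal dA := by
    rw [hV, Matrix.transpose_mul, Matrix.transpose_transpose]
    have : P * V₀ᵀ * B * (V₀ * Pᵀ) = P * (V₀ᵀ * B * V₀) * Pᵀ := by
      simp only [Matrix.mul_assoc]
    rw [this, hdiagB, hσ, ← hP3]
    have h4 : P * (Pᵀ * diagonal dA * P) * Pᵀ = (P * Pᵀ) * diagonal dA * (P * Pᵀ) := by
      simp only [Matrix.mul_assoc]
    rw [h4, hP2, Matrix.one_mul, Matrix.mul_one]
  clear_value V
  set e : Fin n → ℝ := fun _ => (1:ℝ) with he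
  set u : Fin n → ℝ := U₀ᵀ *ᵥ e with hu
  set v : Fin n → ℝ := Vᵀ *ᵥ e with hv
  -- transported second hypothesis
  have hconjJ : ∀ (M : Matrix (Fin n) (Fin n) ℝ), Mᵀ * vecMulVec e e * M
      = vecMulVec (Mᵀ *ᵥ e) (Mᵀ *ᵥ e) := by
    intro M
    rw [_root_.mul_vecMulVec, vecMulVec_mul]
  have hchar2 : (diagonal dA + vecMulVec u u).charpoly
      = (diagonal dA + vecMulVec v v).charpoly := by
    have hAu : U₀ᵀ * (A + vecMulVec e e) * U₀ = diagonal dA + vecMulVec u u := by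
      rw [Matrix.mul_add, Matrix.add_mul, hdiagA, hconjJ U₀, hu]
    have hBv : Vᵀ * (B + vecMulVec e e) * V = diagonal dA + vecMulVec v v := by
      rw [Matrix.mul_add, Matrix.add_mul, hdiagB', hconjJ V, hv]
    rw [← hAu, ← hBv, charpoly_conj _ _ _ hU1, charpoly_conj _ _ _ hV1']
    exact h2
  have hsum : (∑ i, C (u i ^ 2) * ∏ j ∈ Finset.univ.erase i, (X - C (dA j)))
      = (∑ i, C (v i ^ 2) * ∏ j ∈ Finset.univ.erase i, (X - C (dA j))) := by
    have := hchar2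
    rw [charpoly_diag_add_rankone, charpoly_diag_add_rankone] at this
    exact sub_right_injective this
  have hclass := class_sum_sq_eq dA u v hsum
  obtain ⟨W, hWsym, hWW, hWD, hWu⟩ := exists_reflection dA u v hclass
  have hQT : (U₀ * W * Vᵀ)ᵀ = V * W * U₀ᵀ := by
    rw [Matrix.transpose_mul, Matrix.transpose_mul, Matrix.transpose_transpose, hWsym,
      ← Matrix.mul_assoc]
  have hAeq : A = U₀ * diagonal dA * U₀ᵀ := by
    have h5 : U₀ * (U₀ᵀ * A * U₀) * U₀ᵀ = (U₀ * U₀ᵀ) * A * (U₀ * U₀ᵀ) := by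
      simp only [Matrix.mul_assoc]
    rw [hdiagA] at h5
    rw [h5, hU2, Matrix.one_mul, Matrix.mul_one]
  have hBeq : B = V * diagonal dA * Vᵀ := by
    have h5 : V * (Vᵀ * B * V) * Vᵀ = (V * Vᵀ) * B * (V * Vᵀ) := by
      simp only [Matrix.mul_assoc]
    rw [hdiagB'] at h5
    rw [h5, hV2', Matrix.one_mul, Matrix.mul_one]
  refine ⟨U₀ * W * Vᵀ, ?_, ?_, ?_⟩
  · rw [hQT]
    calc V * W * U₀ᵀ * (U₀ * W * Vᵀ)
        = V * (W * ((U₀ᵀ * U₀) * (W * Vᵀ))) := by simp only [Matrix.mul_assoc]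
      _ = 1 := by
          rw [hU1, Matrix.one_mul, ← Matrix.mul_assoc W W Vᵀ, hWW, Matrix.one_mul, hV2']
  · rw [hQT]
    conv_lhs => rw [hAeq]
    conv_rhs => rw [hBeq]
    calc V * W * U₀ᵀ * (U₀ * diagonal dA * U₀ᵀ) * (U₀ * W * Vᵀ)
        = V * (W * ((U₀ᵀ * U₀) * (diagonal dA * ((U₀ᵀ * U₀) * (W * Vᵀ))))) := by
          simp only [Matrix.mul_assoc]
      _ = V * (W * (diagonal dA * (W * Vᵀ))) := by rw [hU1, Matrix.one_mul, Matrix.one_mul]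
      _ = V * ((W * diagonal dA) * (W * Vᵀ)) := by rw [Matrix.mul_assoc]
      _ = V * ((diagonal dA * W) * (W * Vᵀ)) := by rw [hWD]
      _ = V * (diagonal dA * ((W * W) * Vᵀ)) := by simp only [Matrix.mul_assoc]
      _ = V * (diagonal dA * Vᵀ) := by rw [hWW, Matrix.one_mul]
      _ = V * diagonal dA * Vᵀ := by rw [Matrix.mul_assoc]
  · show (U₀ * W * Vᵀ)ᵀ *ᵥ e = e
    rw [hQT, ← Matrix.mulVec_mulVec, ← Matrix.mulVec_mulVec]
    rw [← hu, hWu, hv, Matrix.mulVec_mulVec, hV2', Matrix.one_mulVec]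
end

section
/- Let A, B be n×n real symmetric matrices and α, β nonzero vectors in ℝ^n. Then A is similar to B and A + αα^T is similar to B + ββ^T if and only if there exists an orthogonal matrix Q such that Q^T A Q = B and Q^T α = β. -/
open Matrix Polynomial Filter Topology

section Aux

variable {n : ℕ}

private theorem my_eval_charpoly (M : Matrix (Fin n) (Fin n) ℝ) (x : ℝ) :
    M.charpoly.eval x = (Matrix.diagonal (fun _ => x) - M).det := by
  rw [Matrix.charpoly, ← Polynomial.coe_evalRingHom, RingHom.map_det]
  congr 1
  ext i j
  by_cases h : i = j <;>
    simp [charmatrix_apply, Matrix.diagonal_apply, h, Matrix.one_apply]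

private theorem my_charpoly_conj (Q A : Matrix (Fin n) (Fin n) ℝ) (hQ : Qᵀ * Q = 1) :
    (Qᵀ * A * Q).charpoly = A.charpoly := by
  have hQ' : Q * Qᵀ = 1 := mul_eq_one_comm.mp hQ
  have key : charmatrix (Qᵀ * A * Q) = (Qᵀ.map C) * charmatrix A * (Q.map C) := by
    rw [charmatrix, charmatrix, Matrix.mul_sub, Matrix.sub_mul]
    congr 1
    · rw [(Matrix.scalar_commute (X : ℝ[X]) (fun r => (Commute.all _ _)) (Qᵀ.map C)).symm.eq]
      rw [Matrix.mul_assoc, ← Matrix.map_mul, hQ, Matrix.map_one _ (map_zero C) (map_one C),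
        Matrix.mul_one]
    · simp only [RingHom.mapMatrix_apply]
      rw [← Matrix.map_mul, ← Matrix.map_mul]
  rw [Matrix.charpoly, key, Matrix.det_mul, Matrix.det_mul, mul_comm, ← mul_assoc, ← Matrix.det_mul,
    ← Matrix.map_mul, hQ', Matrix.map_one _ (map_zero C) (map_one C), Matrix.det_one, one_mul]
  rfl

private theorem my_conj_vecMulVec (M : Matrix (Fin n) (Fin n) ℝ) (v : Fin n → ℝ) :
    Mᵀ * Matrix.vecMulVec v v * M = Matrix.vecMulVec (Mᵀ *ᵥ v) (Mᵀ *ᵥ v) := by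
  ext i j
  rw [Matrix.mul_apply]
  simp only [Matrix.mul_apply, Matrix.vecMulVec_apply, Matrix.transpose_apply, Matrix.mulVec,
    dotProduct, Finset.sum_mul, Finset.mul_sum]
  apply Finset.sum_congr rfl
  intro k _
  apply Finset.sum_congr rfl
  intro m _
  ring

/-- sorted spectral decomposition -/
private theorem my_spectral (A : Matrix (Fin n) (Fin n) ℝ) (hA : A.IsSymm) :
    ∃ (P : Matrix (Fin n) (Fin n) ℝ) (d : Fin n → ℝ),
      Pᵀ * P = 1 ∧ Pᵀ * A * P = diagonal d ∧ Monotone d := by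
  have hH : A.IsHermitian := by
    rwa [Matrix.IsHermitian, Matrix.conjTranspose_eq_transpose_of_trivial]
  have hP1 : (hH.eigenvectorUnitary : Matrix (Fin n) (Fin n) ℝ)ᵀ *
      (hH.eigenvectorUnitary : Matrix (Fin n) (Fin n) ℝ) = 1 := by
    have := (Matrix.mem_unitaryGroup_iff').mp hH.eigenvectorUnitary.2
    rwa [Matrix.star_eq_conjTranspose, Matrix.conjTranspose_eq_transpose_of_trivial] at this
  have hP2 : (hH.eigenvectorUnitary : Matrix (Fin n) (Fin n) ℝ)ᵀ * A *
      (hH.eigenvectorUnitary : Matrix (Fin n) (Fin n) ℝ) = diagonal hH.eigenvalues := by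
    have := hH.conjStarAlgAut_star_eigenvectorUnitary
    simp only [Unitary.conjStarAlgAut_star_apply, RCLike.ofReal_real_eq_id, Function.id_comp] at this
    rwa [Matrix.star_eq_conjTranspose, Matrix.conjTranspose_eq_transpose_of_trivial] at this
  -- sort
  set σ := Tuple.sort hH.eigenvalues with hσ
  set Pσ : Matrix (Fin n) (Fin n) ℝ := Matrix.of (fun i j => if σ j = i then (1:ℝ) else 0) with hPσ
  have hPσ1 : Pσᵀ * Pσ = 1 := by
    ext i j
    simp only [Matrix.mul_apply, Matrix.transpose_apply, hPσ, Matrix.of_apply, Matrix.one_apply]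
    rw [Finset.sum_eq_single (σ i)]
    · simp [Equiv.injective σ |>.eq_iff, eq_comm]
    · intro b _ hb
      rw [if_neg (fun hc => hb hc.symm), zero_mul]
    · simp
  have hPσ2 : Pσᵀ * diagonal hH.eigenvalues * Pσ = diagonal (hH.eigenvalues ∘ σ) := by
    ext i j
    rw [Matrix.mul_apply]
    simp only [Matrix.mul_diagonal, Matrix.transpose_apply, hPσ, Matrix.of_apply]
    rw [Finset.sum_eq_single (σ i)]
    · simp [Matrix.diagonal_apply, Equiv.injective σ |>.eq_iff, eq_comm]
    · intro b _ hb
      rw [if_neg (fun hc => hb hc.symm), zero_mul, zero_mul]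
    · simp
  refine ⟨(hH.eigenvectorUnitary : Matrix (Fin n) (Fin n) ℝ) * Pσ, hH.eigenvalues ∘ σ, ?_, ?_, ?_⟩
  · rw [Matrix.transpose_mul, Matrix.mul_assoc, ← Matrix.mul_assoc _ _ Pσ, hP1,
      Matrix.one_mul, hPσ1]
  · rw [Matrix.transpose_mul, ← hPσ2, ← hP2]
    simp only [Matrix.mul_assoc]
  · exact Tuple.monotone_sort hH.eigenvalues

private theorem my_charpoly_prod (A : Matrix (Fin n) (Fin n) ℝ) (P : Matrix (Fin n) (Fin n) ℝ)
    (d : Fin n → ℝ) (h1 : Pᵀ * P = 1) (h2 : Pᵀ * A * P = diagonal d) :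
    A.charpoly = ∏ i, (X - C (d i)) := by
  rw [← my_charpoly_conj P A h1, h2,
    Matrix.charpoly_of_upperTriangular _ (Matrix.blockTriangular_diagonal d)]
  simp

private theorem my_monotone_eq (d e : Fin n → ℝ) (hd : Monotone d) (he : Monotone e)
    (h : ∏ i, (X - C (d i)) = ∏ i, (X - C (e i))) : d = e := by
  have hm : (Finset.univ.val.map d) = (Finset.univ.val.map e) := by
    have h' : ((Finset.univ.val.map d).map fun a => X - C a).prod
        = ((Finset.univ.val.map e).map fun a => X - C a).prod := by
      rwa [Multiset.map_map, Multiset.map_map, ← Finset.prod_eq_multiset_prod,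
        ← Finset.prod_eq_multiset_prod]
    have := congrArg Polynomial.roots h'
    rwa [Polynomial.roots_multiset_prod_X_sub_C, Polynomial.roots_multiset_prod_X_sub_C] at this
  have hl : List.ofFn d = List.ofFn e := by
    apply List.Perm.eq_of_sortedLE hd.sortedLE_ofFn he.sortedLE_ofFn
    rw [← Multiset.coe_eq_coe]
    rw [Fin.univ_val_map, Fin.univ_val_map] at hm
    exact_mod_cast hm
  exact List.ofFn_injective hl

private theorem my_eval_rank_one (d a : Fin n → ℝ) (x : ℝ) (hx : ∀ i, x ≠ d i) :
    (Matrix.diagonal d + Matrix.vecMulVec a a).charpoly.eval x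
      = (∏ i, (x - d i)) * (1 - ∑ i, a i ^ 2 / (x - d i)) := by
  rw [my_eval_charpoly]
  have h1 : Matrix.diagonal (fun _ => x) - (Matrix.diagonal d + Matrix.vecMulVec a a)
      = Matrix.diagonal (fun i => x - d i) + Matrix.replicateCol Unit (-a) * Matrix.replicateRow Unit a := by
    rw [← Matrix.vecMulVec_eq]
    ext i j
    by_cases h : i = j <;>
      simp [Matrix.diagonal_apply, h, Matrix.vecMulVec_apply, Matrix.neg_apply] <;> ring
  rw [h1]
  have hdet : IsUnit (Matrix.diagonal (fun i => x - d i)).det := by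
    rw [Matrix.det_diagonal]
    exact (Finset.prod_ne_zero_iff.mpr (fun i _ => sub_ne_zero.mpr (hx i))).isUnit
  rw [Matrix.det_add_replicateCol_mul_replicateRow hdet, Matrix.det_diagonal]
  congr 1
  rw [Matrix.det_unique]
  have hinv : (Matrix.diagonal (fun i => x - d i))⁻¹
      = Matrix.diagonal (fun i => (x - d i)⁻¹) := by
    apply Matrix.inv_eq_right_inv
    rw [Matrix.diagonal_mul_diagonal]
    rw [show (fun i => (x - d i) * (x - d i)⁻¹) = fun _ => (1:ℝ) from funext fun i =>
      mul_inv_cancel₀ (sub_ne_zero.mpr (hx i)), Matrix.diagonal_one]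
  rw [hinv]
  simp only [Matrix.add_apply, Matrix.one_apply_eq, Matrix.mul_apply, Matrix.replicateRow_apply,
    Matrix.replicateCol_apply, Matrix.mul_diagonal, Matrix.neg_apply, Finset.univ_unique,
    Finset.sum_singleton]
  rw [sub_eq_add_neg, ← Finset.sum_neg_distrib]
  congr 1
  apply Finset.sum_congr rfl
  intro i _
  rw [Finset.sum_eq_single i]
  · simp [Matrix.diagonal_apply]
    field_simp
  · intro b _ hb
    simp [Matrix.diagonal_apply_ne _ hb]
  · simp

private theorem my_filter_sums (d a b : Fin n → ℝ)
    (h : ∀ x : ℝ, x ∉ Set.range d → ∑ i, a i ^ 2 / (x - d i) = ∑ i, b i ^ 2 / (x - d i))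
    (l : ℝ) :
    ∑ i ∈ Finset.univ.filter (fun i => d i = l), a i ^ 2
      = ∑ i ∈ Finset.univ.filter (fun i => d i = l), b i ^ 2 := by
  by_cases hl : l ∈ Set.range d
  swap
  · rw [Finset.filter_false_of_mem, Finset.sum_empty, Finset.sum_empty]
    exact fun i _ hi => hl ⟨i, hi⟩
  set U : Set ℝ := (Set.range d)ᶜ with hU
  have hdense : Dense U := by
    have := dense_univ (X := ℝ) |>.diff_finite (Set.finite_range d)
    rwa [← Set.compl_eq_univ_diff] at this
  have hne : (𝓝[U] l).NeBot := mem_closure_iff_nhdsWithin_neBot.1 (hdense l)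
  set F : ℝ → ℝ := fun x => ∑ i, (a i ^ 2 - b i ^ 2) * ((x - l) / (x - d i)) with hF
  have hzero : ∀ x ∈ U, F x = 0 := by
    intro x hx
    have hx' : x ∉ Set.range d := hx
    have : ∀ i, (a i ^ 2 - b i ^ 2) * ((x - l) / (x - d i))
        = (x - l) * (a i ^ 2 / (x - d i)) - (x - l) * (b i ^ 2 / (x - d i)) := by
      intro i; ring
    rw [hF]
    simp only [this, Finset.sum_sub_distrib, ← Finset.mul_sum, h x hx', sub_self]
  have hlim : Tendsto F (𝓝[U] l) (𝓝 (∑ i, if d i = l then a i ^ 2 - b i ^ 2 else 0)) := by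
    apply tendsto_finset_sum
    intro i _
    by_cases hi : d i = l
    · rw [if_pos hi]
      apply Tendsto.congr' _ tendsto_const_nhds
      filter_upwards [eventually_mem_nhdsWithin] with x hx
      have hxl : x ≠ l := by
        intro hxeq; exact hx (by rw [hxeq, ← hi]; exact ⟨i, rfl⟩)
      rw [hi, div_self (sub_ne_zero.mpr hxl), mul_one]
    · rw [if_neg hi]
      have : ContinuousAt (fun x : ℝ => (a i ^ 2 - b i ^ 2) * ((x - l) / (x - d i))) l := by
        apply ContinuousAt.mul continuousAt_const
        apply ContinuousAt.div (continuousAt_id.sub continuousAt_const)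
          (continuousAt_id.sub continuousAt_const)
        simpa [sub_ne_zero] using fun hc => hi hc.symm
      have := this.tendsto.mono_left (nhdsWithin_le_nhds (s := U))
      simpa using this
  have h0 : Tendsto F (𝓝[U] l) (𝓝 0) := by
    apply Tendsto.congr' _ tendsto_const_nhds
    filter_upwards [eventually_mem_nhdsWithin] with x hx
    exact (hzero x hx).symm
  have huniq := tendsto_nhds_unique hlim h0
  rw [Finset.sum_filter, Finset.sum_filter]
  have h2 : ∑ i, (if d i = l then a i ^ 2 else 0) - ∑ i, (if d i = l then b i ^ 2 else 0) = 0 := by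
    rw [← Finset.sum_sub_distrib, ← huniq]
    apply Finset.sum_congr rfl
    intro i _
    by_cases hi : d i = l <;> simp [hi]
  linarith

noncomputable def hh (u : Fin n → ℝ) : Matrix (Fin n) (Fin n) ℝ :=
  1 - (2 / (u ⬝ᵥ u)) • Matrix.vecMulVec u u

lemma hh_mulVec (u x : Fin n → ℝ) :
    hh u *ᵥ x = x - ((2 / (u ⬝ᵥ u)) * (u ⬝ᵥ x)) • u := by
  funext i
  simp only [hh, Matrix.sub_mulVec, Matrix.smul_mulVec, Matrix.one_mulVec, Pi.sub_apply,
    Pi.smul_apply, smul_eq_mul]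
  have : (Matrix.vecMulVec u u *ᵥ x) i = u i * (u ⬝ᵥ x) := by
    simp only [Matrix.mulVec, Matrix.vecMulVec_apply, dotProduct, Finset.mul_sum]
    exact Finset.sum_congr rfl fun j _ => by ring
  rw [this]
  ring

lemma hh_transpose (u : Fin n → ℝ) : (hh u)ᵀ = hh u := by
  simp only [hh, Matrix.transpose_sub, Matrix.transpose_one, Matrix.transpose_smul]
  congr 1
  congr 1
  ext i j
  simp [Matrix.vecMulVec_apply, mul_comm]

lemma vecMulVec_mul_vecMulVec (u : Fin n → ℝ) :
    Matrix.vecMulVec u u * Matrix.vecMulVec u u = (u ⬝ᵥ u) • Matrix.vecMulVec u u := by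
  ext i j
  simp only [Matrix.mul_apply, Matrix.vecMulVec_apply, Matrix.smul_apply, smul_eq_mul,
    dotProduct, Finset.sum_mul]
  exact Finset.sum_congr rfl fun k _ => by ring

lemma hh_orth (u : Fin n → ℝ) : (hh u)ᵀ * hh u = 1 := by
  rw [hh_transpose]
  by_cases hu : u = 0
  · subst hu
    simp [hh, Matrix.vecMulVec_apply]
  · have hud : u ⬝ᵥ u ≠ 0 := fun hc => hu (dotProduct_self_eq_zero.mp hc)
    rw [hh]
    rw [Matrix.sub_mul, Matrix.mul_sub, Matrix.mul_sub, Matrix.one_mul, Matrix.mul_one]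
    rw [Matrix.one_mul]
    simp only [Matrix.mul_smul, Matrix.smul_mul, _root_.vecMulVec_mul_vecMulVec, smul_smul]
    have : 2 / (u ⬝ᵥ u) * (2 / (u ⬝ᵥ u) * (u ⬝ᵥ u)) = 2 / (u ⬝ᵥ u) + 2 / (u ⬝ᵥ u) := by
      field_simp
      ring
    rw [this, add_smul]
    abel

lemma hh_commute_diagonal (d : Fin n → ℝ) (u : Fin n → ℝ) (l : ℝ)
    (hsupp : ∀ i, u i ≠ 0 → d i = l) :
    hh u * Matrix.diagonal d = Matrix.diagonal d * hh u := by
  have key : Matrix.vecMulVec u u * Matrix.diagonal d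
      = Matrix.diagonal d * Matrix.vecMulVec u u := by
    ext i j
    rw [Matrix.mul_diagonal, Matrix.diagonal_mul]
    simp only [Matrix.vecMulVec_apply]
    by_cases hi : u i = 0
    · simp [hi]
    by_cases hj : u j = 0
    · simp [hj]
    rw [hsupp i hi, hsupp j hj]
    ring
  rw [hh, Matrix.sub_mul, Matrix.mul_sub, Matrix.one_mul, Matrix.mul_one,
    Matrix.smul_mul, Matrix.mul_smul, key]

lemma hh_fix (u x : Fin n → ℝ) (hux : u ⬝ᵥ x = 0) : hh u *ᵥ x = x := by
  rw [hh_mulVec, hux, mul_zero, zero_smul, sub_zero]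

lemma hh_map (a b : Fin n → ℝ) (hnorm : a ⬝ᵥ a = b ⬝ᵥ b) :
    hh (a - b) *ᵥ a = b := by
  by_cases hu : a - b = 0
  · rw [hu]
    have : a = b := sub_eq_zero.mp hu
    subst this
    simp [hh, Matrix.vecMulVec_apply]
  · have hud : (a - b) ⬝ᵥ (a - b) ≠ 0 := fun hc => hu (dotProduct_self_eq_zero.mp hc)
    rw [hh_mulVec]
    have h1 : (a - b) ⬝ᵥ (a - b) = 2 * (a ⬝ᵥ a - a ⬝ᵥ b) := by
      rw [sub_dotProduct, dotProduct_sub, dotProduct_sub,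
        dotProduct_comm b a]
      rw [← hnorm]; ring
    have h2 : (a - b) ⬝ᵥ a = a ⬝ᵥ a - a ⬝ᵥ b := by
      rw [sub_dotProduct, dotProduct_comm b a]
    have h3 : 2 / ((a - b) ⬝ᵥ (a - b)) * ((a - b) ⬝ᵥ a) = 1 := by
      rw [h1, h2]
      have : a ⬝ᵥ a - a ⬝ᵥ b ≠ 0 := by
        intro hc; rw [h1, hc] at hud; simp at hud
      field_simp
    rw [h3, one_smul, sub_sub_cancel]

theorem core_exists (d a b : Fin n → ℝ)
    (hs : ∀ l : ℝ, ∑ i ∈ Finset.univ.filter (fun i => d i = l), a i ^ 2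
      = ∑ i ∈ Finset.univ.filter (fun i => d i = l), b i ^ 2) :
    ∃ S : Matrix (Fin n) (Fin n) ℝ,
      Sᵀ * S = 1 ∧ S * Matrix.diagonal d = Matrix.diagonal d * S ∧ S *ᵥ a = b := by
  classical
  set mk : Finset ℝ → (Fin n → ℝ) → (Fin n → ℝ) :=
    fun s v i => if d i ∈ s then v i else 0 with hmk
  suffices H : ∀ s : Finset ℝ, ∃ S : Matrix (Fin n) (Fin n) ℝ,
      Sᵀ * S = 1 ∧ S * Matrix.diagonal d = Matrix.diagonal d * S ∧
      (∀ x : Fin n → ℝ, (∀ i, d i ∈ s → x i = 0) → S *ᵥ x = x) ∧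
      S *ᵥ (mk s a) = mk s b by
    obtain ⟨S, h1, h2, _, h4⟩ := H (Finset.image d Finset.univ)
    refine ⟨S, h1, h2, ?_⟩
    have ha : mk (Finset.image d Finset.univ) a = a := by
      funext i; simp [hmk, Finset.mem_image]
    have hb : mk (Finset.image d Finset.univ) b = b := by
      funext i; simp [hmk, Finset.mem_image]
    rwa [ha, hb] at h4
  intro s
  induction s using Finset.induction_on with
  | empty =>
    refine ⟨1, by simp, by simp, fun x _ => by simp, ?_⟩
    have : mk ∅ a = mk ∅ b := by funext i; simp [hmk]
    simp [this]
  | @insert l s hl ih =>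
    obtain ⟨S, h1, h2, h3, h4⟩ := ih
    set al : Fin n → ℝ := fun i => if d i = l then a i else 0 with hal
    set bl : Fin n → ℝ := fun i => if d i = l then b i else 0 with hbl
    set u : Fin n → ℝ := al - bl with hu
    have hsupp : ∀ i, u i ≠ 0 → d i = l := by
      intro i hi
      by_contra hdi
      apply hi
      simp [hu, hal, hbl, hdi]
    have hnorm : al ⬝ᵥ al = bl ⬝ᵥ bl := by
      have ha' : al ⬝ᵥ al = ∑ i ∈ Finset.univ.filter (fun i => d i = l), a i ^ 2 := by
        rw [Finset.sum_filter, dotProduct]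
        exact Finset.sum_congr rfl fun i _ => by
          by_cases hi : d i = l <;> simp [hal, hi] <;> ring
      have hb' : bl ⬝ᵥ bl = ∑ i ∈ Finset.univ.filter (fun i => d i = l), b i ^ 2 := by
        rw [Finset.sum_filter, dotProduct]
        exact Finset.sum_congr rfl fun i _ => by
          by_cases hi : d i = l <;> simp [hbl, hi] <;> ring
      rw [ha', hb', hs l]
    refine ⟨hh u * S, ?_, ?_, ?_, ?_⟩
    · rw [Matrix.transpose_mul, Matrix.mul_assoc, ← Matrix.mul_assoc (hh u)ᵀ, hh_orth,
        Matrix.one_mul, h1]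
    · rw [Matrix.mul_assoc, h2, ← Matrix.mul_assoc, hh_commute_diagonal d u l hsupp,
        Matrix.mul_assoc]
    · intro x hx
      have hxs : ∀ i, d i ∈ s → x i = 0 := fun i hi => hx i (Finset.mem_insert_of_mem hi)
      rw [← Matrix.mulVec_mulVec, h3 x hxs]
      apply hh_fix
      rw [dotProduct]
      apply Finset.sum_eq_zero
      intro i _
      by_cases hui : u i = 0
      · simp [hui]
      · rw [hx i (by rw [hsupp i hui]; exact Finset.mem_insert_self l s), mul_zero]
    · have hsplit : mk (insert l s) a = mk s a + al := by
        funext i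
        simp only [hmk, Finset.mem_insert, Pi.add_apply, hal]
        by_cases hi : d i = l
        · rw [if_pos (Or.inl hi), if_neg (by rw [hi]; exact hl), if_pos hi, zero_add]
        · by_cases hi2 : d i ∈ s <;> simp [hi, hi2]
      have hsplit' : mk (insert l s) b = mk s b + bl := by
        funext i
        simp only [hmk, Finset.mem_insert, Pi.add_apply, hbl]
        by_cases hi : d i = l
        · rw [if_pos (Or.inl hi), if_neg (by rw [hi]; exact hl), if_pos hi, zero_add]
        · by_cases hi2 : d i ∈ s <;> simp [hi, hi2]
      rw [hsplit, hsplit', ← Matrix.mulVec_mulVec, Matrix.mulVec_add, h4]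
      have hSal : S *ᵥ al = al := by
        apply h3
        intro i hi
        simp only [hal]
        rw [if_neg fun (hc : d i = l) => hl (hc ▸ hi)]
      rw [hSal, Matrix.mulVec_add]
      have h5 : hh u *ᵥ (mk s b) = mk s b := by
        apply hh_fix
        rw [dotProduct]
        apply Finset.sum_eq_zero
        intro i _
        by_cases hui : u i = 0
        · simp [hui]
        · have := hsupp i hui
          simp only [hmk]
          rw [if_neg (by rw [this]; exact hl), mul_zero]
      rw [h5, hh_map al bl hnorm]

end Aux

theorem stmt_1 (n : ℕ) (A B : Matrix (Fin n) (Fin n) ℝ)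
    (hA : A.IsSymm) (hB : B.IsSymm)
    (α β : Fin n → ℝ) (hα : α ≠ 0) (hβ : β ≠ 0) :
    (A.charpoly = B.charpoly ∧
      (A + Matrix.vecMulVec α α).charpoly = (B + Matrix.vecMulVec β β).charpoly) ↔
    (∃ Q : Matrix (Fin n) (Fin n) ℝ, Qᵀ * Q = 1 ∧ Qᵀ * A * Q = B ∧ Qᵀ.mulVec α = β) := by
  constructor
  · rintro ⟨h1, h2⟩
    obtain ⟨P₁, d₁, hP₁, hAP₁, hd₁⟩ := my_spectral A hA
    obtain ⟨P₂, d₂, hP₂, hBP₂, hd₂⟩ := my_spectral B hB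
    have hd : d₁ = d₂ := by
      apply my_monotone_eq d₁ d₂ hd₁ hd₂
      rw [← my_charpoly_prod A P₁ d₁ hP₁ hAP₁, ← my_charpoly_prod B P₂ d₂ hP₂ hBP₂, h1]
    subst hd
    set d := d₁
    have hP₁' : P₁ * P₁ᵀ = 1 := mul_eq_one_comm.mp hP₁
    have hP₂' : P₂ * P₂ᵀ = 1 := mul_eq_one_comm.mp hP₂
    set a : Fin n → ℝ := P₁ᵀ *ᵥ α with hadef
    set b : Fin n → ℝ := P₂ᵀ *ᵥ β with hbdef
    -- conjugated rank-one charpoly equality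
    have hc1 : (diagonal d + Matrix.vecMulVec a a).charpoly
        = (A + Matrix.vecMulVec α α).charpoly := by
      rw [← my_charpoly_conj P₁ (A + Matrix.vecMulVec α α) hP₁, Matrix.mul_add, Matrix.add_mul,
        hAP₁, my_conj_vecMulVec]
    have hc2 : (diagonal d + Matrix.vecMulVec b b).charpoly
        = (B + Matrix.vecMulVec β β).charpoly := by
      rw [← my_charpoly_conj P₂ (B + Matrix.vecMulVec β β) hP₂, Matrix.mul_add, Matrix.add_mul,
        hBP₂, my_conj_vecMulVec]
    have hc : (diagonal d + Matrix.vecMulVec a a).charpoly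
        = (diagonal d + Matrix.vecMulVec b b).charpoly := by rw [hc1, hc2, h2]
    -- equal weighted sums
    have hsum : ∀ x : ℝ, x ∉ Set.range d →
        ∑ i, a i ^ 2 / (x - d i) = ∑ i, b i ^ 2 / (x - d i) := by
      intro x hx
      have hx' : ∀ i, x ≠ d i := fun i hc' => hx ⟨i, hc'.symm⟩
      have he := congrArg (Polynomial.eval x) hc
      rw [my_eval_rank_one d a x hx', my_eval_rank_one d b x hx'] at he
      have hprod : (∏ i, (x - d i)) ≠ 0 :=
        Finset.prod_ne_zero_iff.mpr (fun i _ => sub_ne_zero.mpr (hx' i))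
      have := mul_left_cancel₀ hprod he
      linarith
    have hfilter := my_filter_sums d a b hsum
    obtain ⟨S, hS1, hS2, hS3⟩ := core_exists d a b hfilter
    have hS1' : S * Sᵀ = 1 := mul_eq_one_comm.mp hS1
    have hQt : (P₁ * Sᵀ * P₂ᵀ)ᵀ = P₂ * S * P₁ᵀ := by
      simp only [Matrix.transpose_mul, Matrix.transpose_transpose, Matrix.mul_assoc]
    have hA' : A = P₁ * diagonal d * P₁ᵀ := by
      have h' : P₁ * (P₁ᵀ * A * P₁) * P₁ᵀ = A := by
        rw [show P₁ * (P₁ᵀ * A * P₁) * P₁ᵀ = P₁ * P₁ᵀ * A * (P₁ * P₁ᵀ) by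
          simp only [Matrix.mul_assoc], hP₁', Matrix.one_mul, Matrix.mul_one]
      rw [← h', hAP₁]
    have hB' : B = P₂ * diagonal d * P₂ᵀ := by
      have h' : P₂ * (P₂ᵀ * B * P₂) * P₂ᵀ = B := by
        rw [show P₂ * (P₂ᵀ * B * P₂) * P₂ᵀ = P₂ * P₂ᵀ * B * (P₂ * P₂ᵀ) by
          simp only [Matrix.mul_assoc], hP₂', Matrix.one_mul, Matrix.mul_one]
      rw [← h', hBP₂]
    refine ⟨P₁ * Sᵀ * P₂ᵀ, ?_, ?_, ?_⟩
    · rw [hQt]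
      simp only [Matrix.mul_assoc]
      rw [← Matrix.mul_assoc P₁ᵀ P₁, hP₁, Matrix.one_mul, ← Matrix.mul_assoc S Sᵀ, hS1',
        Matrix.one_mul, hP₂']
    · rw [hQt]
      rw [hA', hB']
      simp only [Matrix.mul_assoc]
      rw [← Matrix.mul_assoc P₁ᵀ P₁, hP₁, Matrix.one_mul, ← Matrix.mul_assoc P₁ᵀ P₁, hP₁,
        Matrix.one_mul, ← Matrix.mul_assoc S (diagonal d), hS2, Matrix.mul_assoc (diagonal d) S,
        ← Matrix.mul_assoc S Sᵀ, hS1', Matrix.one_mul]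
    · rw [hQt]
      rw [← Matrix.mulVec_mulVec, ← Matrix.mulVec_mulVec, hS3, hbdef, Matrix.mulVec_mulVec,
        hP₂', Matrix.one_mulVec]
  · rintro ⟨Q, hQ1, hQ2, hQ3⟩
    constructor
    · rw [← hQ2, my_charpoly_conj Q A hQ1]
    · have : Qᵀ * (A + Matrix.vecMulVec α α) * Q = B + Matrix.vecMulVec β β := by
        rw [Matrix.mul_add, Matrix.add_mul, hQ2, my_conj_vecMulVec, hQ3]
      rw [← this, my_charpoly_conj Q _ hQ1]
end

section
/- Let A, B be similar real symmetric n×n matrices with spectral decompositions A = Σ λ_k P_k P_k^T and B = Σ λ_k R_k R_k^T. Let α, α̃, β, β̃ ∈ ℝ^n. If A + αα^T ~ B + ββ^T, A + α̃α̃^T ~ B + β̃β̃^T, and A + (α+α̃)(α+α̃)^T ~ B + (β+β̃)(β+β̃)^T (where ~ denotes similarity), then ⟨P_k^T α, P_k^T α̃⟩ = ⟨R_k^T β, R_k^T β̃⟩ for all k = 1,…,s. -/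
open Matrix Polynomial Finset


lemma eval_cp {n : ℕ} (M : Matrix (Fin n) (Fin n) ℝ) (x : ℝ) :
    (M.charpoly).eval x = (x • (1 : Matrix (Fin n) (Fin n) ℝ) - M).det := by
  rw [Matrix.charpoly]
  have h := RingHom.map_det (Polynomial.evalRingHom x) (charmatrix M)
  simp only [Polynomial.coe_evalRingHom] at h
  rw [show Polynomial.eval x (charmatrix M).det = ((charmatrix M).map (Polynomial.eval x)).det from h]
  congr 1
  ext i j
  by_cases h : i = j <;>
    simp [Matrix.charmatrix_apply, Matrix.one_apply, Matrix.map_apply, h]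


section aux
variable {n s : ℕ}

lemma inv_lem (A : Matrix (Fin n) (Fin n) ℝ) (lam : Fin s → ℝ) (r : Fin s → ℕ)
    (P : ∀ k : Fin s, Matrix (Fin n) (Fin (r k)) ℝ)
    (hP2 : ∀ k, A * P k = lam k • P k)
    (hPcomp : ∑ k, P k * (P k)ᵀ = 1)
    (x : ℝ) (hx : ∀ k, x ≠ lam k) :
    (x • (1 : Matrix (Fin n) (Fin n) ℝ) - A) *
      (∑ k, (x - lam k)⁻¹ • (P k * (P k)ᵀ)) = 1 := by
  rw [Matrix.mul_sum]
  calc ∑ k, (x • (1 : Matrix (Fin n) (Fin n) ℝ) - A) * ((x - lam k)⁻¹ • (P k * (P k)ᵀ))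
      = ∑ k, P k * (P k)ᵀ := by
        refine Finset.sum_congr rfl fun k _ => ?_
        rw [Matrix.mul_smul, Matrix.sub_mul, Matrix.smul_mul, Matrix.one_mul,
          ← Matrix.mul_assoc, hP2 k, Matrix.smul_mul, ← sub_smul, smul_smul,
          inv_mul_cancel₀ (sub_ne_zero.mpr (hx k)), one_smul]
    _ = 1 := hPcomp

lemma dot_sum (v : Fin n → ℝ) (w : Fin s → (Fin n) → ℝ) :
    v ⬝ᵥ (∑ k, w k) = ∑ k, v ⬝ᵥ (w k) := by
  simp only [dotProduct, Finset.sum_apply, Finset.mul_sum]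
  exact Finset.sum_comm

lemma det_lem (A : Matrix (Fin n) (Fin n) ℝ) (lam : Fin s → ℝ) (r : Fin s → ℕ)
    (P : ∀ k : Fin s, Matrix (Fin n) (Fin (r k)) ℝ)
    (hP2 : ∀ k, A * P k = lam k • P k)
    (hPcomp : ∑ k, P k * (P k)ᵀ = 1)
    (v : Fin n → ℝ) (x : ℝ) (hx : ∀ k, x ≠ lam k) :
    (x • (1 : Matrix (Fin n) (Fin n) ℝ) - A - Matrix.vecMulVec v v).det =
      (x • (1 : Matrix (Fin n) (Fin n) ℝ) - A).det *
        (1 - ∑ k, (x - lam k)⁻¹ * (((P k)ᵀ.mulVec v) ⬝ᵥ ((P k)ᵀ.mulVec v))) := by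
  set N : Matrix (Fin n) (Fin n) ℝ := ∑ k, (x - lam k)⁻¹ • (P k * (P k)ᵀ) with hN
  have hinv : (x • (1 : Matrix (Fin n) (Fin n) ℝ) - A) * N = 1 :=
    inv_lem A lam r P hP2 hPcomp x hx
  have hfac : x • (1 : Matrix (Fin n) (Fin n) ℝ) - A - Matrix.vecMulVec v v =
      (x • (1 : Matrix (Fin n) (Fin n) ℝ) - A) * (1 - N * Matrix.vecMulVec v v) := by
    rw [Matrix.mul_sub, Matrix.mul_one, ← Matrix.mul_assoc, hinv, Matrix.one_mul]
  rw [hfac, Matrix.det_mul]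
  congr 1
  have hv : Matrix.vecMulVec v v = Matrix.replicateCol (Fin 1) v * Matrix.replicateRow (Fin 1) v :=
    Matrix.vecMulVec_eq (Fin 1) v v
  have hrw : (1 : Matrix (Fin n) (Fin n) ℝ) - N * Matrix.vecMulVec v v
      = 1 + Matrix.replicateCol (Fin 1) (-(N *ᵥ v)) * Matrix.replicateRow (Fin 1) v := by
    rw [hv, ← Matrix.mul_assoc, ← Matrix.replicateCol_mulVec, sub_eq_add_neg]
    congr 1
    ext i j
    simp [Matrix.mul_apply]
  rw [hrw]
  refine (Matrix.det_one_add_replicateCol_mul_replicateRow (ι := Fin 1) (-(N *ᵥ v)) v).trans ?_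
  have hsum : N *ᵥ v = ∑ k, (x - lam k)⁻¹ • ((P k * (P k)ᵀ) *ᵥ v) := by
    ext i
    simp only [hN, Matrix.mulVec, dotProduct, Matrix.sum_apply, Matrix.smul_apply,
      Finset.sum_apply, Finset.sum_mul, smul_eq_mul, Pi.smul_apply, mul_assoc]
    rw [Finset.sum_comm]
    simp [Finset.mul_sum]
  have hq : v ⬝ᵥ (N *ᵥ v) = ∑ k, (x - lam k)⁻¹ * (((P k)ᵀ.mulVec v) ⬝ᵥ ((P k)ᵀ.mulVec v)) := by
    rw [hsum, dot_sum v fun k => (x - lam k)⁻¹ • ((P k * (P k)ᵀ) *ᵥ v)]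
    refine Finset.sum_congr rfl fun k _ => ?_
    rw [dotProduct_smul, smul_eq_mul]
    congr 1
    rw [← Matrix.mulVec_mulVec, Matrix.dotProduct_mulVec, ← Matrix.mulVec_transpose]
  rw [dotProduct_neg, hq]
  ring
end aux


lemma coef_lem {s : ℕ} (lam : Fin s → ℝ) (hlam : Function.Injective lam)
    (c d : Fin s → ℝ)
    (h : ∀ x : ℝ, (∀ k, x ≠ lam k) →
      ∑ k, (x - lam k)⁻¹ * c k = ∑ k, (x - lam k)⁻¹ * d k) :
    ∀ k, c k = d k := by
  set g : Polynomial ℝ :=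
    ∑ k, Polynomial.C (c k - d k) * ∏ j ∈ Finset.univ.erase k, (Polynomial.X - Polynomial.C (lam j)) with hg
  have hgeval : ∀ x : ℝ, g.eval x =
      ∑ k, (c k - d k) * ∏ j ∈ Finset.univ.erase k, (x - lam j) := by
    intro x
    simp [hg, Polynomial.eval_finset_sum, Polynomial.eval_prod]
  have hzero : g = 0 := by
    apply Polynomial.eq_zero_of_infinite_isRoot
    have hsub : {x : ℝ | ∀ k, x ≠ lam k} ⊆ {x : ℝ | g.IsRoot x} := by
      intro x hx
      have hx' : ∀ k, x ≠ lam k := hx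
      have key : ∀ k : Fin s, (c k - d k) * ∏ j ∈ Finset.univ.erase k, (x - lam j)
          = (∏ j, (x - lam j)) * ((x - lam k)⁻¹ * (c k - d k)) := by
        intro k
        have hprod : ∏ j, (x - lam j) = (x - lam k) * ∏ j ∈ Finset.univ.erase k, (x - lam j) :=
          (Finset.mul_prod_erase Finset.univ _ (Finset.mem_univ k)).symm
        rw [hprod]
        field_simp [sub_ne_zero.mpr (hx' k)]
      have : g.eval x = (∏ j, (x - lam j)) *
          ((∑ k, (x - lam k)⁻¹ * c k) - ∑ k, (x - lam k)⁻¹ * d k) := by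
        rw [hgeval]
        rw [← Finset.sum_sub_distrib, Finset.mul_sum]
        refine Finset.sum_congr rfl fun k _ => ?_
        rw [key k, ← mul_sub]
      have : g.eval x = 0 := by rw [this, h x hx', sub_self, mul_zero]
      exact this
    refine Set.Infinite.mono hsub ?_
    have hfin : (Set.range lam).Finite := Set.finite_range lam
    have : {x : ℝ | ∀ k, x ≠ lam k} = (Set.range lam)ᶜ := by
      ext x; simp [Set.mem_range, not_exists, eq_comm]
    rw [this]
    exact hfin.infinite_compl
  intro k
  have hev := congrArg (Polynomial.eval (lam k)) hzero
  rw [hgeval] at hev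
  simp only [Polynomial.eval_zero] at hev
  have honly : ∑ k', (c k' - d k') * ∏ j ∈ Finset.univ.erase k', (lam k - lam j)
      = (c k - d k) * ∏ j ∈ Finset.univ.erase k, (lam k - lam j) := by
    rw [Finset.sum_eq_single k]
    · intro k' _ hk'
      have : (∏ j ∈ Finset.univ.erase k', (lam k - lam j)) = 0 := by
        apply Finset.prod_eq_zero (Finset.mem_erase.mpr ⟨Ne.symm hk', Finset.mem_univ k⟩)
        · exact sub_self (lam k)
      rw [this, mul_zero]
    · intro hk; exact absurd (Finset.mem_univ k) hk
  rw [honly] at hev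
  have hne : (∏ j ∈ Finset.univ.erase k, (lam k - lam j)) ≠ 0 := by
    apply Finset.prod_ne_zero_iff.mpr
    intro j hj
    exact sub_ne_zero.mpr fun h => (Finset.mem_erase.mp hj).1 (hlam h.symm)
  have := (mul_eq_zero.mp hev).resolve_right hne
  linarith [this]

theorem stmt_4 (n s : ℕ) (A B : Matrix (Fin n) (Fin n) ℝ)
    (hA : A.IsSymm) (hB : B.IsSymm)
    (lam : Fin s → ℝ) (hlam : Function.Injective lam)
    (r : Fin s → ℕ)
    (P : ∀ k : Fin s, Matrix (Fin n) (Fin (r k)) ℝ)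
    (R : ∀ k : Fin s, Matrix (Fin n) (Fin (r k)) ℝ)
    (hP1 : ∀ k, (P k)ᵀ * P k = 1) (hR1 : ∀ k, (R k)ᵀ * R k = 1)
    (hP2 : ∀ k, A * P k = lam k • P k) (hR2 : ∀ k, B * R k = lam k • R k)
    (hPsum : A = ∑ k, lam k • (P k * (P k)ᵀ))
    (hRsum : B = ∑ k, lam k • (R k * (R k)ᵀ))
    (hPcomp : ∑ k, P k * (P k)ᵀ = 1) (hRcomp : ∑ k, R k * (R k)ᵀ = 1)
    (α α' β β' : Fin n → ℝ)
    (hsim : A.charpoly = B.charpoly)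
    (h1 : (A + Matrix.vecMulVec α α).charpoly = (B + Matrix.vecMulVec β β).charpoly)
    (h2 : (A + Matrix.vecMulVec α' α').charpoly = (B + Matrix.vecMulVec β' β').charpoly)
    (h3 : (A + Matrix.vecMulVec (α + α') (α + α')).charpoly =
          (B + Matrix.vecMulVec (β + β') (β + β')).charpoly) :
    ∀ k, ((P k)ᵀ.mulVec α) ⬝ᵥ ((P k)ᵀ.mulVec α') = ((R k)ᵀ.mulVec β) ⬝ᵥ ((R k)ᵀ.mulVec β') := by
  -- generic step: from one charpoly equality, eigenspace norms agree
  have key : ∀ (v w : Fin n → ℝ),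
      (A + Matrix.vecMulVec v v).charpoly = (B + Matrix.vecMulVec w w).charpoly →
      ∀ k, ((P k)ᵀ.mulVec v) ⬝ᵥ ((P k)ᵀ.mulVec v) = ((R k)ᵀ.mulVec w) ⬝ᵥ ((R k)ᵀ.mulVec w) := by
    intro v w hch
    apply coef_lem lam hlam
    intro x hx
    have eA := congrArg (Polynomial.eval x) hch
    rw [eval_cp, eval_cp] at eA
    have hA' : x • (1 : Matrix (Fin n) (Fin n) ℝ) - (A + Matrix.vecMulVec v v)
        = x • 1 - A - Matrix.vecMulVec v v := by rw [sub_add_eq_sub_sub]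
    have hB' : x • (1 : Matrix (Fin n) (Fin n) ℝ) - (B + Matrix.vecMulVec w w)
        = x • 1 - B - Matrix.vecMulVec w w := by rw [sub_add_eq_sub_sub]
    rw [hA', hB', det_lem A lam r P hP2 hPcomp v x hx,
      det_lem B lam r R hR2 hRcomp w x hx] at eA
    have detAB : (x • (1 : Matrix (Fin n) (Fin n) ℝ) - A).det
        = (x • (1 : Matrix (Fin n) (Fin n) ℝ) - B).det := by
      have := congrArg (Polynomial.eval x) hsim
      rwa [eval_cp, eval_cp] at this
    have detne : (x • (1 : Matrix (Fin n) (Fin n) ℝ) - A).det ≠ 0 := by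
      have hinv := inv_lem A lam r P hP2 hPcomp x hx
      have := congrArg Matrix.det hinv
      rw [Matrix.det_mul, Matrix.det_one] at this
      exact left_ne_zero_of_mul_eq_one this
    rw [← detAB] at eA
    have hcancel := mul_left_cancel₀ detne eA
    linarith [hcancel, Finset.sum_congr (rfl : (Finset.univ : Finset (Fin s)) = Finset.univ)
      (fun k _ => rfl : ∀ k ∈ Finset.univ, (x - lam k)⁻¹ * (((P k)ᵀ.mulVec v) ⬝ᵥ ((P k)ᵀ.mulVec v)) = _)]
  intro k
  have e1 := key α β h1 k
  have e2 := key α' β' h2 k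
  have e3 := key (α + α') (β + β') h3 k
  have hPa : (P k)ᵀ.mulVec (α + α') = (P k)ᵀ.mulVec α + (P k)ᵀ.mulVec α' :=
    Matrix.mulVec_add _ _ _
  have hRb : (R k)ᵀ.mulVec (β + β') = (R k)ᵀ.mulVec β + (R k)ᵀ.mulVec β' :=
    Matrix.mulVec_add _ _ _
  rw [hPa, hRb] at e3
  simp only [add_dotProduct, dotProduct_add] at e3
  have hc1 : ((P k)ᵀ.mulVec α') ⬝ᵥ ((P k)ᵀ.mulVec α) = ((P k)ᵀ.mulVec α) ⬝ᵥ ((P k)ᵀ.mulVec α') :=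
    dotProduct_comm _ _
  have hc2 : ((R k)ᵀ.mulVec β') ⬝ᵥ ((R k)ᵀ.mulVec β) = ((R k)ᵀ.mulVec β) ⬝ᵥ ((R k)ᵀ.mulVec β') :=
    dotProduct_comm _ _
  rw [hc1, hc2] at e3
  linarith
end

section
/- Let A be a real symmetric n×n matrix with spectral decomposition A = Σ_{k=1}^s λ_k P_k P_k^T and let α, α̃ ∈ ℝ^n. Then for all x not an eigenvalue of A, det(xI − (A + αα^T + α̃α̃^T)) = det(xI − A) · [ (1 − Σ_k ‖P_k^T α‖²/(x−λ_k)) (1 − Σ_k ‖P_k^T α̃‖²/(x−λ_k)) − (Σ_k ⟨P_k^T α, P_k^T α̃⟩/(x−λ_k))² ]. -/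
/-!
Put `M = x • 1 - A`. Since `M` maps each `P k` to `(x - lam k) • P k` and `∑ k, P k * (P k)ᵀ = 1`,
the resolvent is `M⁻¹ = ∑ k, (x - lam k)⁻¹ • (P k * (P k)ᵀ)`. Writing the rank-two update as
`Vᵀ * V`, where `V` is the `2 × n` matrix with rows `α` and `α'`, the Weinstein–Aronszajn identity
gives `det (M - Vᵀ * V) = det M * det (1 - V * M⁻¹ * Vᵀ)`, and the entries of the `2 × 2` matrix
`V * M⁻¹ * Vᵀ` are the sums `∑ k, ⟪(P k)ᵀ v, (P k)ᵀ w⟫ / (x - lam k)` for `v, w ∈ {α, α'}`.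
-/

open Matrix

namespace Matrix

variable {R : Type*} {m n : Type*} [Fintype n]

theorem of_mul_mul_transpose_of_apply [CommSemiring R] (v : m → n → R) (N : Matrix n n R)
    (i j : m) : (of v * N * (of v)ᵀ) i j = v i ⬝ᵥ N *ᵥ v j := by
  rw [dotProduct_mulVec]
  rfl

theorem dotProduct_sum_smul_mul_transpose_mulVec [CommSemiring R] {ι : Type*} [Fintype ι]
    {r : ι → Type*} [∀ k, Fintype (r k)] (c : ι → R) (P : ∀ k, Matrix n (r k) R) (v w : n → R) :
    v ⬝ᵥ (∑ k, c k • (P k * (P k)ᵀ)) *ᵥ w = ∑ k, c k * ((P k)ᵀ *ᵥ v ⬝ᵥ (P k)ᵀ *ᵥ w) := by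
  simp only [sum_mulVec, dotProduct_sum, smul_mulVec, dotProduct_smul, smul_eq_mul]
  refine Finset.sum_congr rfl fun k _ => ?_
  rw [← mulVec_mulVec, dotProduct_mulVec, ← mulVec_transpose]

omit [Fintype n] in
theorem vecMulVec_add_vecMulVec [CommSemiring R] (a b : n → R) :
    vecMulVec a a + vecMulVec b b = (of ![a, b])ᵀ * of ![a, b] := by
  ext i j
  simp [mul_apply, Fin.sum_univ_two, vecMulVec_apply]

theorem det_sub_mul_of_mul_eq_one [CommRing R] [DecidableEq n] [Fintype m] [DecidableEq m]
    {M N : Matrix n n R} (hMN : M * N = 1) (U : Matrix n m R) (V : Matrix m n R) :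
    (M - U * V).det = M.det * (1 - V * N * U).det := by
  have hfactor : M - U * V = M * (1 - N * U * V) := by
    rw [Matrix.mul_sub, Matrix.mul_one, ← Matrix.mul_assoc, ← Matrix.mul_assoc, hMN,
      Matrix.one_mul]
  rw [hfactor, det_mul, det_one_sub_mul_comm, Matrix.mul_assoc]

theorem smul_one_sub_mul_sum_inv_smul_eq_one [Field R] [DecidableEq n] {ι : Type*} [Fintype ι]
    {r : ι → Type*} [∀ k, Fintype (r k)] {A : Matrix n n R} {lam : ι → R}
    {P : ∀ k, Matrix n (r k) R} {Q : ∀ k, Matrix (r k) n R}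
    (hP : ∀ k, A * P k = lam k • P k) (hPQ : ∑ k, P k * Q k = 1) {x : R} (hx : ∀ k, x ≠ lam k) :
    (x • 1 - A) * ∑ k, (x - lam k)⁻¹ • (P k * Q k) = 1 := by
  rw [Matrix.mul_sum]
  refine (Finset.sum_congr rfl fun k _ => ?_).trans hPQ
  rw [Matrix.mul_smul, ← Matrix.mul_assoc, Matrix.sub_mul, hP, Matrix.smul_mul, Matrix.one_mul,
    ← sub_smul, Matrix.smul_mul, smul_smul, inv_mul_cancel₀ (sub_ne_zero.mpr (hx k)), one_smul]

end Matrix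

theorem stmt_6_general (n s : ℕ) (A : Matrix (Fin n) (Fin n) ℝ)
    (lam : Fin s → ℝ)
    (r : Fin s → ℕ) (P : ∀ k : Fin s, Matrix (Fin n) (Fin (r k)) ℝ)
    (hP2 : ∀ k, A * P k = lam k • P k)
    (hPcomp : ∑ k, P k * (P k)ᵀ = 1)
    (α α' : Fin n → ℝ) (x : ℝ) (hx : ∀ k, x ≠ lam k) :
    (x • (1 : Matrix (Fin n) (Fin n) ℝ)
        - (A + Matrix.vecMulVec α α + Matrix.vecMulVec α' α')).det =
    (x • (1 : Matrix (Fin n) (Fin n) ℝ) - A).det *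
      ((1 - ∑ k, ((P k)ᵀ.mulVec α) ⬝ᵥ ((P k)ᵀ.mulVec α) / (x - lam k)) *
       (1 - ∑ k, ((P k)ᵀ.mulVec α') ⬝ᵥ ((P k)ᵀ.mulVec α') / (x - lam k)) -
       (∑ k, ((P k)ᵀ.mulVec α) ⬝ᵥ ((P k)ᵀ.mulVec α') / (x - lam k)) ^ 2) := by
  rw [add_assoc, vecMulVec_add_vecMulVec, ← sub_sub,
    det_sub_mul_of_mul_eq_one (smul_one_sub_mul_sum_inv_smul_eq_one hP2 hPcomp hx), det_fin_two]
  simp only [Matrix.sub_apply, one_apply_eq, one_apply_ne zero_ne_one, one_apply_ne one_ne_zero,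
    of_mul_mul_transpose_of_apply, dotProduct_sum_smul_mul_transpose_mulVec,
    cons_val_zero, cons_val_one, div_eq_inv_mul, dotProduct_comm ((P _)ᵀ *ᵥ α')]
  ring

theorem stmt_6 (n s : ℕ) (A : Matrix (Fin n) (Fin n) ℝ) (hA : A.IsSymm)
    (lam : Fin s → ℝ) (hlam : Function.Injective lam)
    (r : Fin s → ℕ) (P : ∀ k : Fin s, Matrix (Fin n) (Fin (r k)) ℝ)
    (hP1 : ∀ k, (P k)ᵀ * P k = 1)
    (hP2 : ∀ k, A * P k = lam k • P k)
    (hPsum : A = ∑ k, lam k • (P k * (P k)ᵀ))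
    (hPcomp : ∑ k, P k * (P k)ᵀ = 1)
    (α α' : Fin n → ℝ) (x : ℝ) (hx : ∀ k, x ≠ lam k) :
    (x • (1 : Matrix (Fin n) (Fin n) ℝ)
        - (A + Matrix.vecMulVec α α + Matrix.vecMulVec α' α')).det =
    (x • (1 : Matrix (Fin n) (Fin n) ℝ) - A).det *
      ((1 - ∑ k, ((P k)ᵀ.mulVec α) ⬝ᵥ ((P k)ᵀ.mulVec α) / (x - lam k)) *
       (1 - ∑ k, ((P k)ᵀ.mulVec α') ⬝ᵥ ((P k)ᵀ.mulVec α') / (x - lam k)) -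
       (∑ k, ((P k)ᵀ.mulVec α) ⬝ᵥ ((P k)ᵀ.mulVec α') / (x - lam k)) ^ 2) :=
  stmt_6_general n s A lam r P hP2 hPcomp α α' x hx
end

section
/- Let A and B be real symmetric n×n matrices with the same distinct eigenvalues λ₁,…,λ_s, with spectral decompositions A = Σ λ_k P_k P_k^T and B = Σ λ_k R_k R_k^T, and α, α̃, β, β̃ ∈ ℝ^n. Suppose ‖P_k^T α‖ = ‖R_k^T β‖ and ‖P_k^T α̃‖ = ‖R_k^T β̃‖ for all k, and that A + αα^T + α̃α̃^T and B + ββ^T + β̃β̃^T have the same characteristic polynomial. Then (Σ_k ⟨P_k^T α, P_k^T α̃⟩/(x−λ_k))² = (Σ_k ⟨R_k^T β, R_k^T β̃⟩/(x−λ_k))² for all x not among λ₁,…,λ_s, and consequently either ⟨P_k^T α, P_k^T α̃⟩ = ⟨R_k^T β, R_k^T β̃⟩ for all k, or ⟨P_k^T α, P_k^T α̃⟩ = −⟨R_k^T β, R_k^T β̃⟩ for all k. -/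
/-!
Gathering the columns of all `Pₖ` gives a matrix `Q` with `Q Qᵀ = ∑ₖ Pₖ Pₖᵀ = 1`; taking traces
shows that `Q` is square, so also `Qᵀ Q = 1` and `A = Q D Qᵀ` with `D` the diagonal matrix listing
each `λₖ` with multiplicity `rₖ`. Hence `A` and `B` share the characteristic polynomial `χ`.

Away from the eigenvalues, `(x - A)⁻¹ = ∑ₖ Pₖ Pₖᵀ / (x - λₖ)`, and the matrix determinant lemma for
the rank-two update gives
`χ_{A + ααᵀ + α'α'ᵀ}(x) = χ(x) ((1 - f_{αα}(x)) (1 - f_{α'α'}(x)) - f_{αα'}(x)²)` with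
`f_{uv}(x) = ∑ₖ ⟨Pₖᵀu, Pₖᵀv⟩ / (x - λₖ)`, and likewise for `B`. The norm hypotheses then leave
`f_{αα'}² = f_{ββ'}²`. Clearing denominators turns this into `p² = q²` for two polynomials whose
values at `λⱼ` are the `j`-th coefficients times the same nonzero number, and `p = ±q` gives the
dichotomy.
-/

open Polynomial Finset

namespace Matrix

section FromSigmaCols

variable {R : Type*} {m ι : Type*} {κ : ι → Type*}

def fromSigmaCols (P : ∀ k, Matrix m (κ k) R) : Matrix m (Σ k, κ k) R :=
  of fun i p => P p.1 i p.2

variable [CommRing R] (P : ∀ k, Matrix m (κ k) R)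

theorem mul_fromSigmaCols {l : Type*} [Fintype m] (A : Matrix l m R) :
    A * fromSigmaCols P = fromSigmaCols fun k => A * P k := by
  ext i p
  simp [fromSigmaCols, mul_apply]

variable [Fintype ι] [∀ k, Fintype (κ k)]

theorem fromSigmaCols_mul_transpose :
    fromSigmaCols P * (fromSigmaCols P)ᵀ = ∑ k, P k * (P k)ᵀ := by
  ext i j
  simp only [mul_apply, fromSigmaCols, transpose_apply, of_apply, Fintype.sum_sigma, sum_apply]

variable [∀ k, DecidableEq (κ k)]

theorem card_eq_card_sigma [Fintype m] [DecidableEq m] [CharZero R]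
    (hP1 : ∀ k, (P k)ᵀ * P k = 1) (hPcomp : ∑ k, P k * (P k)ᵀ = 1) :
    Fintype.card m = Fintype.card (Σ k, κ k) := by
  have htrace := congrArg trace hPcomp
  simp only [trace_sum, trace_mul_comm (P _), hP1, trace_one] at htrace
  rw [Fintype.card_sigma]
  exact_mod_cast htrace.symm

variable [DecidableEq ι]

theorem fromSigmaCols_smul (lam : ι → R) :
    fromSigmaCols (fun k => lam k • P k) =
      fromSigmaCols P * diagonal fun p : Σ k, κ k => lam p.1 := by
  ext i p
  simp [fromSigmaCols, mul_comm]

variable [Fintype m] [DecidableEq m]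

theorem eq_fromSigmaCols_mul_diagonal_mul_transpose (A : Matrix m m R) (lam : ι → R)
    (hP2 : ∀ k, A * P k = lam k • P k) (hPcomp : ∑ k, P k * (P k)ᵀ = 1) :
    A = fromSigmaCols P * diagonal (fun p : Σ k, κ k => lam p.1) * (fromSigmaCols P)ᵀ := by
  rw [← fromSigmaCols_smul, ← funext hP2, ← mul_fromSigmaCols, Matrix.mul_assoc,
    fromSigmaCols_mul_transpose, hPcomp, Matrix.mul_one]

theorem charpoly_eq_prod_of_spectral [CharZero R] (A : Matrix m m R) (lam : ι → R)
    (hP1 : ∀ k, (P k)ᵀ * P k = 1) (hP2 : ∀ k, A * P k = lam k • P k)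
    (hPcomp : ∑ k, P k * (P k)ᵀ = 1) :
    A.charpoly = ∏ p : Σ k, κ k, (X - C (lam p.1)) := by
  have hcard := card_eq_card_sigma P hP1 hPcomp
  have hQtQ : (fromSigmaCols P)ᵀ * fromSigmaCols P = 1 :=
    (mul_eq_one_comm_of_card_eq _ _ _ hcard).mp ((fromSigmaCols_mul_transpose P).trans hPcomp)
  rw [eq_fromSigmaCols_mul_diagonal_mul_transpose P A lam hP2 hPcomp, Matrix.mul_assoc,
    charpoly_mul_comm_of_le _ _ hcard.ge, hcard, Nat.sub_self, pow_zero, one_mul,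
    Matrix.mul_assoc, hQtQ, Matrix.mul_one, charpoly_diagonal]

end FromSigmaCols

theorem det_sub_vecMulVec_sub_vecMulVec {R m : Type*} [CommRing R] [Fintype m] [DecidableEq m]
    {M N : Matrix m m R} (hMN : M * N = 1) (a b : m → R) :
    (M - vecMulVec a a - vecMulVec b b).det =
      M.det * ((1 - a ⬝ᵥ N *ᵥ a) * (1 - b ⬝ᵥ N *ᵥ b) - (a ⬝ᵥ N *ᵥ b) * (b ⬝ᵥ N *ᵥ a)) := by
  let W : Matrix m (Fin 2) R := (of ![a, b])ᵀ
  have hW : M - vecMulVec a a - vecMulVec b b = M * (1 - N * W * Wᵀ) := by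
    have hWWt : W * Wᵀ = vecMulVec a a + vecMulVec b b := by
      ext i j
      simp [W, mul_apply, Fin.sum_univ_two, vecMulVec_apply]
    rw [Matrix.mul_sub, Matrix.mul_one, Matrix.mul_assoc, ← Matrix.mul_assoc M, hMN,
      Matrix.one_mul, hWWt, sub_sub]
  have hgram : ∀ i j, (Wᵀ * (N * W)) i j = ![a, b] i ⬝ᵥ N *ᵥ ![a, b] j := fun _ _ => rfl
  rw [hW, det_mul, det_one_sub_mul_comm, det_fin_two]
  simp [hgram]

section Resolvent

variable {K : Type*} [Field K] {m ι : Type*} [Fintype m] [Fintype ι]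
  {κ : ι → Type*} [∀ k, Fintype (κ k)] (lam : ι → K) (P : ∀ k, Matrix m (κ k) K)

def spectralResolvent (x : K) : Matrix m m K :=
  ∑ k, (x - lam k)⁻¹ • (P k * (P k)ᵀ)

theorem dotProduct_spectralResolvent_mulVec (x : K) (u v : m → K) :
    u ⬝ᵥ spectralResolvent lam P x *ᵥ v = ∑ k, ((P k)ᵀ *ᵥ u ⬝ᵥ (P k)ᵀ *ᵥ v) / (x - lam k) := by
  simp only [spectralResolvent, sum_mulVec, dotProduct_sum, smul_mulVec, dotProduct_smul,
    ← mulVec_mulVec, dotProduct_mulVec, ← mulVec_transpose, smul_eq_mul, div_eq_inv_mul]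

variable [DecidableEq m]

theorem scalar_sub_mul_spectralResolvent (A : Matrix m m K) (hP2 : ∀ k, A * P k = lam k • P k)
    (hPcomp : ∑ k, P k * (P k)ᵀ = 1) {x : K} (hx : ∀ k, x ≠ lam k) :
    (scalar m x - A) * spectralResolvent lam P x = 1 := by
  have hshift : ∀ k, (scalar m x - A) * P k = (x - lam k) • P k := fun k => by
    rw [Matrix.sub_mul, hP2, scalar_apply, ← smul_eq_diagonal_mul, sub_smul]
  rw [← hPcomp, spectralResolvent, Finset.mul_sum]
  refine Finset.sum_congr rfl fun k _ => ?_
  rw [Matrix.mul_smul, ← Matrix.mul_assoc, hshift, Matrix.smul_mul, smul_smul,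
    inv_mul_cancel₀ (sub_ne_zero.mpr (hx k)), one_smul]

theorem eval_charpoly_add_vecMulVec_add_vecMulVec (A : Matrix m m K)
    (hP2 : ∀ k, A * P k = lam k • P k) (hPcomp : ∑ k, P k * (P k)ᵀ = 1) {x : K}
    (hx : ∀ k, x ≠ lam k) (a b : m → K) :
    (A + vecMulVec a a + vecMulVec b b).charpoly.eval x =
      A.charpoly.eval x * ((1 - ∑ k, ((P k)ᵀ *ᵥ a ⬝ᵥ (P k)ᵀ *ᵥ a) / (x - lam k)) *
        (1 - ∑ k, ((P k)ᵀ *ᵥ b ⬝ᵥ (P k)ᵀ *ᵥ b) / (x - lam k)) -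
        (∑ k, ((P k)ᵀ *ᵥ a ⬝ᵥ (P k)ᵀ *ᵥ b) / (x - lam k)) ^ 2) := by
  rw [eval_charpoly, eval_charpoly, ← sub_sub, ← sub_sub,
    det_sub_vecMulVec_sub_vecMulVec (scalar_sub_mul_spectralResolvent lam P A hP2 hPcomp hx)]
  simp only [dotProduct_spectralResolvent_mulVec, dotProduct_comm ((P _)ᵀ *ᵥ b) ((P _)ᵀ *ᵥ a)]
  ring

end Resolvent

end Matrix

namespace Polynomial

variable {K ι : Type*} [Field K] [Fintype ι] [DecidableEq ι] (lam : ι → K)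

noncomputable def partialFractionNumerator (c : ι → K) : K[X] :=
  ∑ k, C (c k) * Lagrange.nodal (univ.erase k) lam

theorem eval_partialFractionNumerator {x : K} (hx : ∀ k, x ≠ lam k) (c : ι → K) :
    (partialFractionNumerator lam c).eval x = (∑ k, c k / (x - lam k)) * ∏ k, (x - lam k) := by
  rw [partialFractionNumerator, eval_finsetSum, Finset.sum_mul]
  refine Finset.sum_congr rfl fun k _ => ?_
  rw [eval_mul, eval_C, Lagrange.eval_nodal, ← Finset.mul_prod_erase _ _ (mem_univ k),
    ← mul_assoc, div_mul_cancel₀ _ (sub_ne_zero.mpr (hx k))]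

theorem eval_partialFractionNumerator_at_node (c : ι → K) (j : ι) :
    (partialFractionNumerator lam c).eval (lam j) = c j * ∏ k ∈ univ.erase j, (lam j - lam k) := by
  rw [partialFractionNumerator, eval_finsetSum, Finset.sum_eq_single j]
  · rw [eval_mul, eval_C, Lagrange.eval_nodal]
  · intro k _ hkj
    rw [eval_mul, Lagrange.eval_nodal_at_node (mem_erase.mpr ⟨Ne.symm hkj, mem_univ j⟩), mul_zero]
  · exact fun hj => absurd (mem_univ j) hj

theorem eq_or_eq_neg_of_sq_sum_div_eq [Infinite K] (hlam : Function.Injective lam)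
    {a b : ι → K} (h : ∀ x, (∀ k, x ≠ lam k) →
      (∑ k, a k / (x - lam k)) ^ 2 = (∑ k, b k / (x - lam k)) ^ 2) :
    (∀ k, a k = b k) ∨ (∀ k, a k = -b k) := by
  have hsq : partialFractionNumerator lam a ^ 2 = partialFractionNumerator lam b ^ 2 := by
    refine eq_of_infinite_eval_eq _ _ ((Set.finite_range lam).infinite_compl.mono fun x hx => ?_)
    have hx' : ∀ k, x ≠ lam k := fun k hk => hx ⟨k, hk.symm⟩
    simp only [Set.mem_ofPred_eq, eval_pow, eval_partialFractionNumerator lam hx', mul_pow,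
      h x hx']
  have hnode : ∀ j, ∏ k ∈ univ.erase j, (lam j - lam k) ≠ 0 := fun j =>
    prod_ne_zero_iff.mpr fun k hk => sub_ne_zero.mpr fun he => (mem_erase.mp hk).1 (hlam he).symm
  refine (sq_eq_sq_iff_eq_or_eq_neg.mp hsq).imp (fun he j => ?_) (fun he j => ?_)
  · have hj := congrArg (eval (lam j)) he
    rw [eval_partialFractionNumerator_at_node, eval_partialFractionNumerator_at_node] at hj
    exact mul_right_cancel₀ (hnode j) hj
  · have hj := congrArg (eval (lam j)) he
    rw [eval_neg, eval_partialFractionNumerator_at_node, eval_partialFractionNumerator_at_node,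
      ← neg_mul] at hj
    exact mul_right_cancel₀ (hnode j) hj

end Polynomial

open Matrix

theorem stmt_16_general (n s : ℕ) (A B : Matrix (Fin n) (Fin n) ℝ)
    (lam : Fin s → ℝ) (hlam : Function.Injective lam)
    (r : Fin s → ℕ)
    (P : ∀ k : Fin s, Matrix (Fin n) (Fin (r k)) ℝ)
    (R : ∀ k : Fin s, Matrix (Fin n) (Fin (r k)) ℝ)
    (hP1 : ∀ k, (P k)ᵀ * P k = 1) (hR1 : ∀ k, (R k)ᵀ * R k = 1)
    (hP2 : ∀ k, A * P k = lam k • P k) (hR2 : ∀ k, B * R k = lam k • R k)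
    (hPcomp : ∑ k, P k * (P k)ᵀ = 1) (hRcomp : ∑ k, R k * (R k)ᵀ = 1)
    (α α' β β' : Fin n → ℝ)
    (hnorm1 : ∀ k, ((P k)ᵀ.mulVec α) ⬝ᵥ ((P k)ᵀ.mulVec α)
                 = ((R k)ᵀ.mulVec β) ⬝ᵥ ((R k)ᵀ.mulVec β))
    (hnorm2 : ∀ k, ((P k)ᵀ.mulVec α') ⬝ᵥ ((P k)ᵀ.mulVec α')
                 = ((R k)ᵀ.mulVec β') ⬝ᵥ ((R k)ᵀ.mulVec β'))
    (hcp : (A + Matrix.vecMulVec α α + Matrix.vecMulVec α' α').charpoly =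
           (B + Matrix.vecMulVec β β + Matrix.vecMulVec β' β').charpoly) :
    (∀ x : ℝ, (∀ k, x ≠ lam k) →
      (∑ k, ((P k)ᵀ.mulVec α) ⬝ᵥ ((P k)ᵀ.mulVec α') / (x - lam k)) ^ 2 =
      (∑ k, ((R k)ᵀ.mulVec β) ⬝ᵥ ((R k)ᵀ.mulVec β') / (x - lam k)) ^ 2) ∧
    ((∀ k, ((P k)ᵀ.mulVec α) ⬝ᵥ ((P k)ᵀ.mulVec α')
         = ((R k)ᵀ.mulVec β) ⬝ᵥ ((R k)ᵀ.mulVec β')) ∨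
     (∀ k, ((P k)ᵀ.mulVec α) ⬝ᵥ ((P k)ᵀ.mulVec α')
         = -(((R k)ᵀ.mulVec β) ⬝ᵥ ((R k)ᵀ.mulVec β')))) := by
  have hAB : A.charpoly = B.charpoly := by
    rw [charpoly_eq_prod_of_spectral P A lam hP1 hP2 hPcomp,
      charpoly_eq_prod_of_spectral R B lam hR1 hR2 hRcomp]
  have hsq : ∀ x : ℝ, (∀ k, x ≠ lam k) →
      (∑ k, ((P k)ᵀ.mulVec α) ⬝ᵥ ((P k)ᵀ.mulVec α') / (x - lam k)) ^ 2 =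
      (∑ k, ((R k)ᵀ.mulVec β) ⬝ᵥ ((R k)ᵀ.mulVec β') / (x - lam k)) ^ 2 := by
    intro x hx
    have hB : B.charpoly.eval x ≠ 0 := by
      rw [eval_charpoly]
      exact det_ne_zero_of_right_inverse (scalar_sub_mul_spectralResolvent lam R B hR2 hRcomp hx)
    have hev := congrArg (eval x) hcp
    rw [eval_charpoly_add_vecMulVec_add_vecMulVec lam P A hP2 hPcomp hx,
      eval_charpoly_add_vecMulVec_add_vecMulVec lam R B hR2 hRcomp hx, hAB] at hev
    simp only [hnorm1, hnorm2] at hev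
    linarith [mul_left_cancel₀ hB hev]
  exact ⟨hsq, eq_or_eq_neg_of_sq_sum_div_eq lam hlam hsq⟩

theorem stmt_16 (n s : ℕ) (A B : Matrix (Fin n) (Fin n) ℝ)
    (hA : A.IsSymm) (hB : B.IsSymm)
    (lam : Fin s → ℝ) (hlam : Function.Injective lam)
    (r : Fin s → ℕ)
    (P : ∀ k : Fin s, Matrix (Fin n) (Fin (r k)) ℝ)
    (R : ∀ k : Fin s, Matrix (Fin n) (Fin (r k)) ℝ)
    (hP1 : ∀ k, (P k)ᵀ * P k = 1) (hR1 : ∀ k, (R k)ᵀ * R k = 1)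
    (hP2 : ∀ k, A * P k = lam k • P k) (hR2 : ∀ k, B * R k = lam k • R k)
    (hPcomp : ∑ k, P k * (P k)ᵀ = 1) (hRcomp : ∑ k, R k * (R k)ᵀ = 1)
    (α α' β β' : Fin n → ℝ)
    (hnorm1 : ∀ k, ((P k)ᵀ.mulVec α) ⬝ᵥ ((P k)ᵀ.mulVec α)
                 = ((R k)ᵀ.mulVec β) ⬝ᵥ ((R k)ᵀ.mulVec β))
    (hnorm2 : ∀ k, ((P k)ᵀ.mulVec α') ⬝ᵥ ((P k)ᵀ.mulVec α')
                 = ((R k)ᵀ.mulVec β') ⬝ᵥ ((R k)ᵀ.mulVec β'))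
    (hcp : (A + Matrix.vecMulVec α α + Matrix.vecMulVec α' α').charpoly =
           (B + Matrix.vecMulVec β β + Matrix.vecMulVec β' β').charpoly) :
    (∀ x : ℝ, (∀ k, x ≠ lam k) →
      (∑ k, ((P k)ᵀ.mulVec α) ⬝ᵥ ((P k)ᵀ.mulVec α') / (x - lam k)) ^ 2 =
      (∑ k, ((R k)ᵀ.mulVec β) ⬝ᵥ ((R k)ᵀ.mulVec β') / (x - lam k)) ^ 2) ∧
    ((∀ k, ((P k)ᵀ.mulVec α) ⬝ᵥ ((P k)ᵀ.mulVec α')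
         = ((R k)ᵀ.mulVec β) ⬝ᵥ ((R k)ᵀ.mulVec β')) ∨
     (∀ k, ((P k)ᵀ.mulVec α) ⬝ᵥ ((P k)ᵀ.mulVec α')
         = -(((R k)ᵀ.mulVec β) ⬝ᵥ ((R k)ᵀ.mulVec β')))) :=
  stmt_16_general n s A B lam hlam r P R hP1 hR1 hP2 hR2 hPcomp hRcomp α α' β β' hnorm1 hnorm2 hcp
end
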